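/- arXiv:1808.02420 — 5 statements merged into one kernel-verified Lean document; each statement's English description precedes it below -/
import Mathlib

section
/- Let p : ℝ → ℝ be a polynomial and a < b real numbers. If |p(x) - p(y)| ≤ H for all x, y ∈ [a,b], then |p'(x)| ≤ (H/(b-a)) · (deg p)² for all x ∈ [a,b]. -/
/-!
Rescaling `[a, b]` to `[-1, 1]` and subtracting the midpoint of the range of `p` reduces the
theorem to Markov's inequality `|q'| ≤ n² M` on `[-1, 1]` for `deg q ≤ n` and `|q| ≤ M` there.
Let `θₖ = (2k + 1)π / (2n)`, so that the `cos θₖ` are the zeros of `Tₙ`. M. Riesz's interpolation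
formula writes `sin θ · q'(cos θ)` as a combination of the values `q (cos (θ ± θₖ))` whose weights
`1 / (1 - cos θₖ)` sum to `n²`; this gives Bernstein's inequality `|sin θ · q'(cos θ)| ≤ n M`.
Between the outermost zeros `± cos θ₀` it yields `|q'| ≤ n² M`, because `sin θ₀ ≥ 1 / n`.
Beyond them, interpolate `q'` at the zeros of `Tₙ`: by Bernstein `|q'| ≤ M |Tₙ'|` at the zeros,
the Lagrange basis polynomials all have the same sign there, so `|q'| ≤ M |Tₙ'| ≤ n² M`.
-/

open Real Finset Polynomial

lemma IsCompact.exists_forall_abs_sub_le_half {α : Type*} [TopologicalSpace α] {s : Set α}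
    (hs : IsCompact s) (hne : s.Nonempty) {f : α → ℝ} (hf : ContinuousOn f s) {H : ℝ}
    (hH : ∀ x ∈ s, ∀ y ∈ s, |f x - f y| ≤ H) : ∃ m, ∀ x ∈ s, |f x - m| ≤ H / 2 := by
  obtain ⟨u, hu, hmax⟩ := hs.exists_isMaxOn hne hf
  obtain ⟨w, hw, hmin⟩ := hs.exists_isMinOn hne hf
  refine ⟨(f u + f w) / 2, fun x hx ↦ abs_le.mpr ?_⟩
  have huw := abs_le.mp (hH u hu w hw)
  have hxu : f x ≤ f u := hmax hx
  have hwx : f w ≤ f x := hmin hx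
  constructor <;> linarith

namespace Lagrange

variable {ι : Type*} [DecidableEq ι] {s : Finset ι} {v : ι → ℝ}

lemma eval_basis_eq_div {i : ι} (hi : i ∈ s) (x : ℝ) : (Lagrange.basis s v i).eval x =
    (nodal (s.erase i) v).eval x / (nodal s v).derivative.eval (v i) := by
  rw [basis_eq_prod_sub_inv_mul_nodal_div hi, ← nodal_erase_eq_nodal_div hi, eval_mul, eval_C,
    nodalWeight_eq_eval_derivative_nodal hi, inv_mul_eq_div]

-- Right of all nodes each `basis s v i` is `nodal (s.erase i) v ≥ 0` divided by
-- `(nodal s v)'(v i)`, and these numerators add up to `(nodal s v)'`.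
theorem abs_eval_le_mul_abs_eval_derivative_nodal (hvs : Set.InjOn v s) {r : ℝ[X]}
    (hr : r.degree < #s) {B x : ℝ}
    (hB : ∀ i ∈ s, |r.eval (v i)| ≤ B * |(nodal s v).derivative.eval (v i)|)
    (hx : ∀ i ∈ s, v i ≤ x) :
    |r.eval x| ≤ B * |(nodal s v).derivative.eval x| := by
  have nodal_erase_nonneg (i : ι) : 0 ≤ (nodal (s.erase i) v).eval x := by
    rw [eval_nodal]
    exact prod_nonneg fun j hj ↦ sub_nonneg.mpr (hx j (mem_of_mem_erase hj))
  have term_le (i : ι) (hi : i ∈ s) :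
      |r.eval (v i) * (Lagrange.basis s v i).eval x| ≤ B * (nodal (s.erase i) v).eval x := by
    have hw : 0 < |(nodal s v).derivative.eval (v i)| := abs_pos.mpr fun h ↦
      nodalWeight_ne_zero hvs hi (by rw [nodalWeight_eq_eval_derivative_nodal hi, h, inv_zero])
    rw [eval_basis_eq_div hi, abs_mul, abs_div, abs_of_nonneg (nodal_erase_nonneg i),
      mul_div_assoc', div_le_iff₀ hw]
    calc |r.eval (v i)| * (nodal (s.erase i) v).eval x
        ≤ B * |(nodal s v).derivative.eval (v i)| * (nodal (s.erase i) v).eval x :=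
          mul_le_mul_of_nonneg_right (hB i hi) (nodal_erase_nonneg i)
      _ = _ := by ring
  have hderiv : (nodal s v).derivative.eval x = ∑ i ∈ s, (nodal (s.erase i) v).eval x := by
    rw [derivative_nodal, eval_finsetSum]
  calc |r.eval x| = |∑ i ∈ s, r.eval (v i) * (Lagrange.basis s v i).eval x| := by
        conv_lhs => rw [eq_interpolate hvs hr]
        simp [interpolate_apply, eval_finsetSum, mul_comm]
    _ ≤ ∑ i ∈ s, B * (nodal (s.erase i) v).eval x :=
        (abs_sum_le_sum_abs _ _).trans (sum_le_sum term_le)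
    _ = B * |(nodal s v).derivative.eval x| := by
        rw [← mul_sum, hderiv, abs_of_nonneg (sum_nonneg fun i _ ↦ nodal_erase_nonneg i)]

end Lagrange

namespace Polynomial.Chebyshev

/-- The zeros of `T ℝ n` are `cos (zeroAngle n k)` for `k < n`. -/
noncomputable def zeroAngle (n k : ℕ) : ℝ := (2 * k + 1) * π / (2 * n)

variable {n k j : ℕ}

lemma zeroAngle_pos (hn : n ≠ 0) : 0 < zeroAngle n k := by
  unfold zeroAngle; positivity

lemma zeroAngle_lt_pi (hk : k < n) : zeroAngle n k < π := by
  have : (2 * k + 1 : ℝ) < 2 * n := by exact_mod_cast (by omega : 2 * k + 1 < 2 * n)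
  rw [zeroAngle, div_lt_iff₀ (by linarith)]
  nlinarith [pi_pos]

lemma zeroAngle_zero_le (n k : ℕ) : zeroAngle n 0 ≤ zeroAngle n k := by
  unfold zeroAngle; gcongr; simp

lemma one_sub_cos_zeroAngle_pos (hk : k < n) : 0 < 1 - cos (zeroAngle n k) := by
  have hθ := zeroAngle_pos (k := k) (by omega : n ≠ 0)
  have : cos (zeroAngle n k) < cos 0 :=
    cos_lt_cos_of_nonneg_of_le_pi le_rfl (zeroAngle_lt_pi hk).le hθ
  rw [cos_zero] at this
  linarith

lemma nat_mul_zeroAngle (hn : n ≠ 0) : n * zeroAngle n k = k * π + π / 2 := by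
  unfold zeroAngle; field_simp

lemma cos_nat_mul_zeroAngle (hn : n ≠ 0) : cos (n * zeroAngle n k) = 0 := by
  rw [nat_mul_zeroAngle hn, cos_add_pi_div_two, sin_nat_mul_pi, neg_zero]

lemma sin_nat_mul_zeroAngle (hn : n ≠ 0) : sin (n * zeroAngle n k) = (-1) ^ k := by
  rw [nat_mul_zeroAngle hn, sin_add_pi_div_two, cos_nat_mul_pi]

lemma sum_cos_int_mul_zeroAngle {m : ℤ} (hm : ¬ (2 * n : ℤ) ∣ m) :
    ∑ k ∈ range n, cos (m * zeroAngle n k) = 0 := by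
  rcases eq_or_ne n 0 with rfl | hn
  · simp
  have h := sumZeroes_T_of_not_dvd hm
  rw [sumZeroes, mul_eq_zero, div_eq_zero_iff] at h
  simp only [pi_ne_zero, Nat.cast_eq_zero, hn, or_self, false_or, T_real_cos] at h
  convert h using 4 with k
  rw [zeroAngle]; ring

lemma sum_neg_one_pow_mul_sin_zeroAngle (hj₀ : 0 < j) (hjn : j < n) :
    ∑ k ∈ range n, (-1) ^ k * sin (j * zeroAngle n k) = 0 := by
  have hn : n ≠ 0 := by omega
  have not_dvd : ∀ m : ℕ, 0 < m → m < 2 * n → ¬ (2 * n : ℤ) ∣ (m : ℤ) := fun m h0 h1 h ↦ by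
    exact_mod_cast h0.ne' (Nat.eq_zero_of_dvd_of_lt (by exact_mod_cast h) h1)
  have hsub := sum_cos_int_mul_zeroAngle (n := n) (not_dvd (n - j) (by omega) (by omega))
  have hadd := sum_cos_int_mul_zeroAngle (n := n) (not_dvd (n + j) (by omega) (by omega))
  -- `(-1) ^ k = sin (n θₖ)`, and `2 sin a sin b = cos (a - b) - cos (a + b)`
  have product_to_sum (k : ℕ) : (-1) ^ k * sin (j * zeroAngle n k) =
      (cos (((n - j : ℕ) : ℤ) * zeroAngle n k) - cos (((n + j : ℕ) : ℤ) * zeroAngle n k)) / 2 := by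
    rw [← sin_nat_mul_zeroAngle hn]
    push_cast [Nat.cast_sub hjn.le]
    rw [sub_mul, add_mul, cos_sub, cos_add]
    ring
  simp only [product_to_sum, ← sum_div, sum_sub_distrib, hsub, hadd, sub_self, zero_div]

/-- The weighted sum that Riesz's formula produces for `T ℝ j`. -/
noncomputable def rieszSum (n j : ℕ) : ℝ :=
  ∑ k ∈ range n, (-1) ^ k * sin (j * zeroAngle n k) / (1 - cos (zeroAngle n k))

-- `sin ((j + 2) θ) - 2 sin ((j + 1) θ) + sin (j θ) = -2 (1 - cos θ) sin ((j + 1) θ)`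
lemma rieszSum_add_two (n j : ℕ) :
    rieszSum n (j + 2) - 2 * rieszSum n (j + 1) + rieszSum n j
      = -2 * ∑ k ∈ range n, (-1) ^ k * sin ((j + 1 : ℕ) * zeroAngle n k) := by
  simp only [rieszSum, mul_sum, ← sum_sub_distrib, ← sum_add_distrib]
  refine sum_congr rfl fun k hk ↦ ?_
  have hpos := one_sub_cos_zeroAngle_pos (mem_range.mp hk)
  have e₂ : ((j + 2 : ℕ) : ℝ) * zeroAngle n k = (j + 1 : ℕ) * zeroAngle n k + zeroAngle n k := by
    push_cast; ring
  have e₀ : (j : ℝ) * zeroAngle n k = (j + 1 : ℕ) * zeroAngle n k - zeroAngle n k := by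
    push_cast; ring
  rw [e₂, e₀, sin_add, sin_sub]
  field_simp
  ring

lemma rieszSum_eq_mul_rieszSum_one (hj : j + 1 ≤ n) :
    rieszSum n (j + 1) = (j + 1) * rieszSum n 1 ∧ rieszSum n j = j * rieszSum n 1 := by
  induction j with
  | zero => simp [rieszSum]
  | succ j ih =>
    obtain ⟨h₁, h₀⟩ := ih (by omega)
    have := rieszSum_add_two n j
    rw [h₁, h₀, sum_neg_one_pow_mul_sin_zeroAngle (by omega) (by omega)] at this
    push_cast at h₁ ⊢
    exact ⟨by linarith, h₁⟩

lemma rieszSum_eq (hjn : j ≤ n) : rieszSum n j = n * j := by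
  rcases n with _ | m
  · simp [rieszSum]
  set n := m + 1
  have hn : n ≠ 0 := by omega
  have reflect : rieszSum n (m + 2) = rieszSum n m := by
    refine sum_congr rfl fun k _ ↦ ?_
    have e₂ : ((m + 2 : ℕ) : ℝ) * zeroAngle n k = n * zeroAngle n k + zeroAngle n k := by
      push_cast [n]; ring
    have e₀ : (m : ℝ) * zeroAngle n k = n * zeroAngle n k - zeroAngle n k := by
      push_cast [n]; ring
    rw [e₂, e₀, sin_add, sin_sub, cos_nat_mul_zeroAngle hn]
    ring
  have hZn : ∑ k ∈ range n, (-1) ^ k * sin ((m + 1 : ℕ) * zeroAngle n k) = n := by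
    change ∑ k ∈ range n, (-1) ^ k * sin (n * zeroAngle n k) = n
    simp [sin_nat_mul_zeroAngle hn, ← mul_pow]
  obtain ⟨h₁, h₀⟩ := rieszSum_eq_mul_rieszSum_one (n := n) (j := m) le_rfl
  have hS1 : rieszSum n 1 = n := by
    have := rieszSum_add_two n m
    rw [reflect, hZn, h₁, h₀] at this
    push_cast [n] at this ⊢
    linarith
  rcases Nat.lt_or_eq_of_le hjn with hj | rfl
  · rw [(rieszSum_eq_mul_rieszSum_one hj).2, hS1, mul_comm]
  · rw [h₁, hS1]; push_cast [n]; ring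

lemma sum_inv_one_sub_cos_zeroAngle (n : ℕ) :
    ∑ k ∈ range n, (1 - cos (zeroAngle n k))⁻¹ = n ^ 2 := by
  rcases eq_or_ne n 0 with rfl | hn
  · simp
  rw [sq, ← rieszSum_eq le_rfl, rieszSum]
  refine sum_congr rfl fun k _ ↦ ?_
  rw [sin_nat_mul_zeroAngle hn, ← mul_pow, neg_one_mul, neg_neg, one_pow, one_div]

lemma sin_mul_derivative_T_eval_cos (n : ℤ) (θ : ℝ) :
    sin θ * (T ℝ n).derivative.eval (cos θ) = n * sin (n * θ) := by
  rw [T_derivative_eq_U, eval_mul, mul_left_comm, eval_intCast, mul_comm (sin θ), U_real_cos]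
  push_cast; ring_nf

theorem sin_mul_derivative_eval_cos_eq_sum {q : ℝ[X]} (hq : q.natDegree ≤ n)
    (θ : ℝ) : 2 * n * (sin θ * q.derivative.eval (cos θ)) =
      ∑ k ∈ range n, (-1) ^ k * (q.eval (cos (θ - zeroAngle n k))
        - q.eval (cos (θ + zeroAngle n k))) / (1 - cos (zeroAngle n k)) := by
  let L₁ : ℝ[X] →ₗ[ℝ] ℝ := (2 * n * sin θ) • (leval (cos θ) ∘ₗ derivative)
  let L₂ : ℝ[X] →ₗ[ℝ] ℝ := ∑ k ∈ range n, ((-1) ^ k / (1 - cos (zeroAngle n k))) •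
    (leval (cos (θ - zeroAngle n k)) - leval (cos (θ + zeroAngle n k)))
  have hL₁ (p : ℝ[X]) : L₁ p = 2 * n * (sin θ * p.derivative.eval (cos θ)) := by
    simp [L₁, mul_assoc]
  have hL₂ (p : ℝ[X]) : L₂ p = ∑ k ∈ range n, (-1) ^ k * (p.eval (cos (θ - zeroAngle n k))
      - p.eval (cos (θ + zeroAngle n k))) / (1 - cos (zeroAngle n k)) := by
    simp [L₂, div_mul_eq_mul_div]
  have hspan : q ∈ Submodule.span ℝ (chebyshevTsequence ℝ '' Set.Iio (n + 1)) := by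
    rw [Sequence.span_degreeLT _ (by simp [chebyshevTsequence]), mem_degreeLT]
    exact (degree_le_of_natDegree_le hq).trans_lt (by exact_mod_cast n.lt_succ_self)
  -- both sides are linear in `q`, and the `T ℝ j` with `j ≤ n` span the polynomials of degree `≤ n`
  have hT : Set.EqOn L₁ L₂ (chebyshevTsequence ℝ '' Set.Iio (n + 1)) := by
    rintro _ ⟨j, hj, rfl⟩
    simp only [chebyshevTsequence, hL₁, hL₂, T_real_cos, sin_mul_derivative_T_eval_cos,
      Int.cast_natCast]
    have summand (k : ℕ) : (-1) ^ k *
        (cos (j * (θ - zeroAngle n k)) - cos (j * (θ + zeroAngle n k))) / (1 - cos (zeroAngle n k))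
          = 2 * sin (j * θ) * ((-1) ^ k * sin (j * zeroAngle n k) / (1 - cos (zeroAngle n k))) := by
      rw [mul_sub (j : ℝ), mul_add (j : ℝ), cos_sub, cos_add]
      ring
    rw [sum_congr rfl fun k _ ↦ summand k, ← mul_sum,
      ← rieszSum, rieszSum_eq (Nat.lt_succ_iff.mp hj)]
    ring
  rw [← hL₁, ← hL₂]
  exact LinearMap.eqOn_span hT hspan

theorem abs_sin_mul_derivative_eval_cos_le {q : ℝ[X]} (hq : q.natDegree ≤ n) {M : ℝ}
    (hM : ∀ y ∈ Set.Icc (-1) 1, |q.eval y| ≤ M) (θ : ℝ) :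
    |sin θ * q.derivative.eval (cos θ)| ≤ n * M := by
  rcases eq_or_ne n 0 with rfl | hn
  · simp [derivative_of_natDegree_zero (Nat.le_zero.mp hq)]
  have hn' : (0 : ℝ) < 2 * n := by positivity
  have summand_le (k : ℕ) (hk : k < n) : |(-1) ^ k * (q.eval (cos (θ - zeroAngle n k))
      - q.eval (cos (θ + zeroAngle n k))) / (1 - cos (zeroAngle n k))|
        ≤ 2 * M * (1 - cos (zeroAngle n k))⁻¹ := by
    have hpos := one_sub_cos_zeroAngle_pos hk
    rw [abs_div, abs_mul, abs_neg_one_pow, one_mul, abs_of_pos hpos, div_eq_mul_inv]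
    gcongr
    linarith [abs_sub (q.eval (cos (θ - zeroAngle n k))) (q.eval (cos (θ + zeroAngle n k))),
      hM _ (cos_mem_Icc (θ - zeroAngle n k)), hM _ (cos_mem_Icc (θ + zeroAngle n k))]
  refine le_of_mul_le_mul_left ?_ hn'
  calc 2 * n * |sin θ * q.derivative.eval (cos θ)|
      = |2 * n * (sin θ * q.derivative.eval (cos θ))| := by rw [abs_mul (2 * n : ℝ), abs_of_pos hn']
    _ ≤ ∑ k ∈ range n, 2 * M * (1 - cos (zeroAngle n k))⁻¹ := by
      rw [sin_mul_derivative_eval_cos_eq_sum hq]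
      exact (abs_sum_le_sum_abs _ _).trans
        (sum_le_sum fun k hk ↦ summand_le k (mem_range.mp hk))
    _ = 2 * n * (n * M) := by rw [← mul_sum, sum_inv_one_sub_cos_zeroAngle]; ring

lemma injOn_cos_zeroAngle (n : ℕ) : Set.InjOn (fun k ↦ cos (zeroAngle n k)) (range n) :=
  (range n).nodup_map_iff_injOn.mp (roots_T_real_nodup n)

lemma T_real_eq_C_mul_nodal (n : ℕ) :
    T ℝ n = Polynomial.C (T ℝ n).leadingCoeff *
      Lagrange.nodal (range n) (fun k ↦ cos (zeroAngle n k)) := by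
  have hroots : (T ℝ n).roots = ((range n).image fun k ↦ cos (zeroAngle n k)).val :=
    roots_T_real n
  have hcard : (T ℝ n).roots.card = (T ℝ n).natDegree := by
    rw [hroots, natDegree_T, Finset.card_val, card_image_of_injOn (injOn_cos_zeroAngle n),
      card_range, Int.natAbs_natCast]
  conv_lhs => rw [← C_leadingCoeff_mul_prod_multiset_X_sub_C hcard]
  rw [hroots, Lagrange.nodal, ← Finset.prod_eq_multiset_prod,
    prod_image (injOn_cos_zeroAngle n)]

lemma abs_derivative_T_real_le (n : ℤ) {x : ℝ} (hx : |x| ≤ 1) :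
    |(T ℝ n).derivative.eval x| ≤ n ^ 2 := by
  simpa [derivative_T_eval_one] using abs_iterate_derivative_T_real_le n 1 hx

theorem abs_derivative_eval_le_of_cos_zeroAngle_le (hn : n ≠ 0) {q : ℝ[X]}
    (hq : q.natDegree ≤ n) {M : ℝ} (hM : ∀ y ∈ Set.Icc (-1) 1, |q.eval y| ≤ M) {x : ℝ}
    (hx₀ : cos (zeroAngle n 0) ≤ x) (hx₁ : x ≤ 1) : |q.derivative.eval x| ≤ n ^ 2 * M := by
  have hM₀ : 0 ≤ M := (abs_nonneg _).trans (hM 0 (by norm_num))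
  set c := (T ℝ n).leadingCoeff
  set ω := Lagrange.nodal (range n) (fun k ↦ cos (zeroAngle n k))
  have hT' (y : ℝ) : M * |(T ℝ n).derivative.eval y| = M * |c| * |ω.derivative.eval y| := by
    rw [T_real_eq_C_mul_nodal, derivative_C_mul, eval_mul, eval_C, abs_mul, mul_assoc]
  have hdeg : q.derivative.degree < #(range n) := by
    rw [card_range]
    exact degree_le_natDegree.trans_lt
      (by exact_mod_cast (natDegree_derivative_le q).trans_lt (by omega))
  -- at the nodes, Bernstein's bound `n M / sin θₖ` is exactly `M |T'ₙ|`
  have hnodes (k : ℕ) (hk : k ∈ range n) : |q.derivative.eval (cos (zeroAngle n k))|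
      ≤ M * |c| * |ω.derivative.eval (cos (zeroAngle n k))| := by
    rw [← hT']
    have hsin : 0 < sin (zeroAngle n k) :=
      sin_pos_of_pos_of_lt_pi (zeroAngle_pos hn) (zeroAngle_lt_pi (mem_range.mp hk))
    have hT := congrArg abs (sin_mul_derivative_T_eval_cos n (zeroAngle n k))
    rw [Int.cast_natCast, sin_nat_mul_zeroAngle hn, abs_mul, abs_mul, abs_of_pos hsin,
      abs_neg_one_pow, Nat.abs_cast, mul_one] at hT
    have hB := abs_sin_mul_derivative_eval_cos_le hq hM (zeroAngle n k)
    rw [abs_mul, abs_of_pos hsin, ← hT] at hB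
    exact le_of_mul_le_mul_left (by linarith) hsin
  have hx : ∀ k ∈ range n, cos (zeroAngle n k) ≤ x := fun k hk ↦
    (cos_le_cos_of_nonneg_of_le_pi (zeroAngle_pos hn).le (zeroAngle_lt_pi (mem_range.mp hk)).le
      (zeroAngle_zero_le n k)).trans hx₀
  calc |q.derivative.eval x| ≤ M * |c| * |ω.derivative.eval x| :=
        Lagrange.abs_eval_le_mul_abs_eval_derivative_nodal (injOn_cos_zeroAngle n) hdeg hnodes hx
    _ = M * |(T ℝ n).derivative.eval x| := (hT' x).symm
    _ ≤ M * n ^ 2 := mul_le_mul_of_nonneg_left (by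
        simpa using abs_derivative_T_real_le n (abs_le.mpr ⟨(neg_one_le_cos _).trans hx₀, hx₁⟩)) hM₀
    _ = n ^ 2 * M := mul_comm _ _

lemma one_le_nat_mul_sin_arccos (hn : n ≠ 0) {x : ℝ} (hx₀ : 0 ≤ x)
    (hx : x ≤ cos (zeroAngle n 0)) : 1 ≤ n * sin (arccos x) := by
  have hn' : (1 : ℝ) ≤ n := by exact_mod_cast Nat.one_le_iff_ne_zero.mpr hn
  have hθ : zeroAngle n 0 = π / (2 * n) := by simp [zeroAngle]
  have hθ_pos := zeroAngle_pos (k := 0) hn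
  have hθ_le : zeroAngle n 0 ≤ π / 2 := by
    rw [hθ]; exact div_le_div_of_nonneg_left pi_pos.le two_pos (by linarith)
  have hθ_arccos : zeroAngle n 0 ≤ arccos x := by
    rw [← arccos_cos hθ_pos.le (by linarith [pi_pos])]
    exact arccos_le_arccos hx
  calc 1 = n * (2 / π * zeroAngle n 0) := by rw [hθ]; field_simp
    _ ≤ n * sin (zeroAngle n 0) := by gcongr; exact mul_le_sin hθ_pos.le hθ_le
    _ ≤ n * sin (arccos x) := by
      gcongr
      exact sin_le_sin_of_le_of_le_pi_div_two (by linarith [pi_pos])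
        (arccos_le_pi_div_two.mpr hx₀) hθ_arccos

end Polynomial.Chebyshev

namespace Polynomial

open _root_.Polynomial.Chebyshev

theorem abs_derivative_eval_le_of_abs_eval_le {n : ℕ} {q : ℝ[X]} (hq : q.natDegree ≤ n) {M : ℝ}
    (hM : ∀ y ∈ Set.Icc (-1) 1, |q.eval y| ≤ M) {x : ℝ} (hx : x ∈ Set.Icc (-1) 1) :
    |q.derivative.eval x| ≤ n ^ 2 * M := by
  wlog hx₀ : 0 ≤ x generalizing q x
  · have hdeg : (q.comp (-X)).natDegree ≤ n := natDegree_comp_le.trans (by simpa using hq)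
    have hbound : ∀ y ∈ Set.Icc (-1) 1, |(q.comp (-X)).eval y| ≤ M := fun y hy ↦ by
      simpa using hM (-y) ⟨by linarith [hy.2], by linarith [hy.1]⟩
    simpa [derivative_comp] using
      this (x := -x) hdeg hbound ⟨by linarith [hx.2], by linarith [hx.1]⟩ (by linarith)
  rcases eq_or_ne n 0 with rfl | hn
  · simp [derivative_of_natDegree_zero (Nat.le_zero.mp hq)]
  rcases le_or_gt x (cos (zeroAngle n 0)) with hx_int | hx_end
  · have hB := abs_sin_mul_derivative_eval_cos_le hq hM (arccos x)
    rw [cos_arccos hx.1 hx.2, abs_mul,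
      abs_of_nonneg (sin_nonneg_of_nonneg_of_le_pi (arccos_nonneg x) (arccos_le_pi x))] at hB
    calc |q.derivative.eval x| ≤ n * sin (arccos x) * |q.derivative.eval x| :=
          le_mul_of_one_le_left (abs_nonneg _) (one_le_nat_mul_sin_arccos hn hx₀ hx_int)
      _ ≤ n * (n * M) := by rw [mul_assoc]; gcongr
      _ = n ^ 2 * M := by ring
  · exact abs_derivative_eval_le_of_cos_zeroAngle_le hn hq hM hx_end.le hx.2

theorem abs_derivative_eval_le_of_abs_eval_le_Icc {a b : ℝ} (hab : a < b) {n : ℕ} {q : ℝ[X]}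
    (hq : q.natDegree ≤ n) {M : ℝ} (hM : ∀ y ∈ Set.Icc a b, |q.eval y| ≤ M) {x : ℝ}
    (hx : x ∈ Set.Icc a b) : |q.derivative.eval x| ≤ 2 * n ^ 2 * M / (b - a) := by
  have hba : 0 < b - a := sub_pos.mpr hab
  set σ : ℝ[X] := C ((b - a) / 2) * X + C ((a + b) / 2)
  have hσ (t : ℝ) : σ.eval t = (b - a) / 2 * t + (a + b) / 2 := by simp [σ]
  have hdeg : (q.comp σ).natDegree ≤ n :=
    natDegree_comp_le.trans (by rw [natDegree_linear (by positivity), mul_one]; exact hq)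
  have hbound : ∀ t ∈ Set.Icc (-1) 1, |(q.comp σ).eval t| ≤ M := fun t ht ↦ by
    rw [eval_comp]
    exact hM _ ⟨by rw [hσ]; nlinarith [ht.1], by rw [hσ]; nlinarith [ht.2]⟩
  set t := (2 * x - (a + b)) / (b - a) with ht_def
  have ht : t ∈ Set.Icc (-1) 1 := by
    constructor
    · rw [le_div_iff₀ hba]; linarith [hx.1]
    · rw [div_le_one hba]; linarith [hx.2]
  have hσt : σ.eval t = x := by rw [hσ, ht_def]; field_simp; ring
  have hσ' : derivative σ = C ((b - a) / 2) := by simp [σ]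
  have := abs_derivative_eval_le_of_abs_eval_le hdeg hbound ht
  rw [derivative_comp, hσ', eval_mul, eval_C, eval_comp, hσt, abs_mul,
    abs_of_pos (half_pos hba)] at this
  rw [le_div_iff₀ hba]
  linarith

end Polynomial

theorem markov_inequality_general (p : Polynomial ℝ) (a b H : ℝ) (hab : a < b)
    (hbound : ∀ x ∈ Set.Icc a b, ∀ y ∈ Set.Icc a b, |p.eval x - p.eval y| ≤ H) :
    ∀ x ∈ Set.Icc a b, |p.derivative.eval x| ≤ H / (b - a) * (p.natDegree : ℝ) ^ 2 := by
  intro x hx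
  obtain ⟨m, hm⟩ := isCompact_Icc.exists_forall_abs_sub_le_half (Set.nonempty_Icc.mpr hab.le)
    p.continuous.continuousOn hbound
  have hcentered : ∀ y ∈ Set.Icc a b, |(p - C m).eval y| ≤ H / 2 := fun y hy ↦ by
    simpa using hm y hy
  have := abs_derivative_eval_le_of_abs_eval_le_Icc hab natDegree_sub_C.le hcentered hx
  rw [derivative_sub, derivative_C, sub_zero] at this
  calc |p.derivative.eval x| ≤ 2 * (p.natDegree : ℝ) ^ 2 * (H / 2) / (b - a) := this
    _ = H / (b - a) * (p.natDegree : ℝ) ^ 2 := by ring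

/-- Markov's inequality for polynomials. -/
theorem markov_inequality (p : Polynomial ℝ) (a b H : ℝ) (hab : a < b) (hH : 0 ≤ H)
    (hbound : ∀ x ∈ Set.Icc a b, ∀ y ∈ Set.Icc a b, |p.eval x - p.eval y| ≤ H) :
    ∀ x ∈ Set.Icc a b, |p.derivative.eval x| ≤ H / (b - a) * (p.natDegree : ℝ) ^ 2 :=
  markov_inequality_general p a b H hab hbound
end

section
/- Let p : ℝ → ℝ be a polynomial with |p(x)| ≤ 1 for all x ∈ [-1,1]. Then for every μ ≥ 0 and every x with |x| ≤ 1 + μ, we have |p(x)| ≤ exp(2 · deg(p) · √(2μ + μ²)). -/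
open Polynomial Real Finset

lemma T_deg_pair (n : ℕ) : (Polynomial.Chebyshev.T ℝ n).degree ≤ (n : ℕ) ∧
    (Polynomial.Chebyshev.T ℝ (n+1 : ℕ)).degree ≤ ((n+1 : ℕ) : WithBot ℕ) := by
  induction n with
  | zero =>
    constructor
    · simpa [Polynomial.Chebyshev.T_zero] using degree_one_le
    · push_cast
      simpa [Polynomial.Chebyshev.T_one] using degree_X_le
  | succ n ih =>
    refine ⟨ih.2, ?_⟩
    push_cast
    rw [show ((n:ℤ)+1+1) = ((n:ℤ)+2) from by ring,
      Polynomial.Chebyshev.T_add_two ℝ (n:ℤ)]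
    refine le_trans (degree_sub_le _ _) (max_le ?_ ?_)
    · refine le_trans (degree_mul_le _ _) ?_
      have h1 : (2 * X : ℝ[X]).degree ≤ 1 := by
        refine le_trans (degree_mul_le _ _) ?_
        rw [show (2:ℝ[X]) = C 2 from (map_ofNat C 2).symm]
        calc (C (2:ℝ)).degree + X.degree ≤ 0 + 1 := add_le_add degree_C_le degree_X_le
          _ = 1 := by norm_num
      have h2 := ih.2
      push_cast at h2
      calc (2 * X : ℝ[X]).degree + (Polynomial.Chebyshev.T ℝ ((n:ℤ)+1)).degree
          ≤ 1 + ((n:ℕ)+1 : ℕ) := add_le_add h1 h2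
        _ ≤ (n:ℕ) + 1 + 1 := by
          rw [show ((n:ℕ) + 1 + 1 : WithBot ℕ) = (((n+1+1 : ℕ)) : WithBot ℕ) by push_cast; rfl]
          exact_mod_cast le_of_eq (by omega)
    · refine le_trans ih.1 ?_
      rw [show ((n:ℕ) + 1 + 1 : WithBot ℕ) = (((n+1+1 : ℕ)) : WithBot ℕ) by push_cast; rfl]
      exact_mod_cast by omega

lemma T_cosh_pair (n : ℕ) (u : ℝ) :
    (Polynomial.Chebyshev.T ℝ n).eval (Real.cosh u) = Real.cosh (n * u) ∧
    (Polynomial.Chebyshev.T ℝ (n+1 : ℕ)).eval (Real.cosh u) = Real.cosh ((n+1 : ℕ) * u) := by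
  induction n with
  | zero => simp [Polynomial.Chebyshev.T_zero, Polynomial.Chebyshev.T_one]
  | succ n ih =>
    refine ⟨ih.2, ?_⟩
    push_cast
    rw [show ((n:ℤ)+1+1) = ((n:ℤ)+2) from by ring,
      Polynomial.Chebyshev.T_add_two ℝ (n:ℤ)]
    have h1 := ih.1
    have h2 := ih.2
    push_cast at h1 h2
    have e1 : Real.cosh (((n:ℝ)+1)*u + u) =
        Real.cosh (((n:ℝ)+1)*u) * Real.cosh u + Real.sinh (((n:ℝ)+1)*u) * Real.sinh u :=
      Real.cosh_add _ _
    have e2 : Real.cosh (((n:ℝ)+1)*u - u) =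
        Real.cosh (((n:ℝ)+1)*u) * Real.cosh u - Real.sinh (((n:ℝ)+1)*u) * Real.sinh u :=
      Real.cosh_sub _ _
    simp only [eval_sub, eval_mul, eval_ofNat, eval_X, h1, h2]
    rw [show ((n:ℝ)+1+1)*u = ((n:ℝ)+1)*u + u from by ring,
      show (n:ℝ)*u = ((n:ℝ)+1)*u - u from by ring]
    rw [e1, e2]; ring

lemma paturi_aux (p : Polynomial ℝ) (hp : ∀ x : ℝ, |x| ≤ 1 → |p.eval x| ≤ 1)
    (hd : 1 ≤ p.natDegree) (μ : ℝ) (hμ : 0 ≤ μ) (x : ℝ) (hx1 : 1 < x) (hx2 : x ≤ 1 + μ) :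
    |p.eval x| ≤ Real.exp (2 * (p.natDegree : ℝ) * Real.sqrt (2 * μ + μ ^ 2)) := by
  classical
  set d := p.natDegree with hdd
  set v : ℕ → ℝ := fun k => Real.cos (k * π / d) with hv
  set s := Finset.range (d+1) with hs
  have hdpos : (0:ℝ) < d := by exact_mod_cast hd
  have hmem : ∀ k : ℕ, k ∈ s → (k * π / d : ℝ) ∈ Set.Icc (0:ℝ) π := by
    intro k hk
    rw [hs, Finset.mem_range] at hk
    constructor
    · positivity
    · rw [div_le_iff₀ hdpos]
      have : (k:ℝ) ≤ d := by exact_mod_cast Nat.lt_succ_iff.mp hk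
      nlinarith [Real.pi_pos]
  have hanti : ∀ j ∈ s, ∀ k ∈ s, j < k → v k < v j := by
    intro j hj k hk hjk
    refine Real.strictAntiOn_cos (hmem j hj) (hmem k hk) ?_
    have : (j:ℝ) < k := by exact_mod_cast hjk
    apply div_lt_div_of_pos_right ?_ hdpos
    nlinarith [Real.pi_pos]
  have hinj : Set.InjOn v ↑s := by
    intro a ha b hb hab
    simp only [Finset.coe_sort_coe, Finset.mem_coe] at ha hb
    rcases lt_trichotomy a b with h | h | h
    · exact absurd hab (ne_of_gt (hanti a ha b hb h))
    · exact h
    · exact absurd hab (ne_of_lt (hanti b hb a ha h))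
  have hvle : ∀ k : ℕ, |v k| ≤ 1 := fun k => Real.abs_cos_le_one _
  have hdeg : p.degree < s.card := by
    rw [hs, Finset.card_range]
    exact lt_of_le_of_lt (degree_le_natDegree) (by exact_mod_cast Nat.lt_succ_self d)
  have hrep := Lagrange.eq_interpolate hinj hdeg
  have hx0 : p.eval x = ∑ k ∈ s, p.eval (v k) * (Lagrange.basis s v k).eval x := by
    conv_lhs => rw [hrep]
    rw [Lagrange.interpolate_apply, eval_finset_sum]
    exact Finset.sum_congr rfl fun k _ => by rw [eval_mul, eval_C]
  have hbasis : ∀ k, (Lagrange.basis s v k).eval x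
      = ∏ j ∈ s.erase k, ((v k - v j)⁻¹ * (x - v j)) := by
    intro k
    rw [Lagrange.basis, eval_prod]
    refine Finset.prod_congr rfl fun j _ => ?_
    rw [Lagrange.basisDivisor, eval_mul, eval_C, eval_sub, eval_X, eval_C]
  have hxv : ∀ k : ℕ, 0 < x - v k := by
    intro k
    have := hvle k
    have : v k ≤ 1 := (abs_le.mp (hvle k)).2
    linarith
  have hsign : ∀ k ∈ s, |(Lagrange.basis s v k).eval x|
      = (-1)^k * (Lagrange.basis s v k).eval x := by
    intro k hk
    rw [hbasis]
    set f : ℕ → ℝ := fun j => (v k - v j)⁻¹ * (x - v j) with hf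
    have hsplit : s.erase k = Finset.range k ∪ Finset.Ico (k+1) (d+1) := by
      ext j
      have hk' : k < d + 1 := Finset.mem_range.mp hk
      simp only [hs, Finset.mem_erase, Finset.mem_range, Finset.mem_union, Finset.mem_Ico]
      omega
    have hdisj : Disjoint (Finset.range k) (Finset.Ico (k+1) (d+1)) := by
      rw [Finset.disjoint_left]
      intro a ha hb
      rw [Finset.mem_range] at ha
      rw [Finset.mem_Ico] at hb
      omega
    have hks : k ∈ s := hk
    have hneg : ∀ j ∈ Finset.range k, f j < 0 := by
      intro j hj
      rw [Finset.mem_range] at hj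
      have hjs : j ∈ s := by
        rw [hs, Finset.mem_range]
        rw [hs, Finset.mem_range] at hks
        omega
      have h1 : v k < v j := hanti j hjs k hks hj
      have h2 : (v k - v j)⁻¹ < 0 := inv_lt_zero.mpr (by linarith)
      exact mul_neg_of_neg_of_pos h2 (hxv j)
    have hpos : ∀ j ∈ Finset.Ico (k+1) (d+1), 0 < f j := by
      intro j hj
      rw [Finset.mem_Ico] at hj
      have hjs : j ∈ s := by rw [hs, Finset.mem_range]; omega
      have h1 : v j < v k := hanti k hks j hjs hj.1
      have h2 : 0 < (v k - v j)⁻¹ := inv_pos.mpr (by linarith)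
      exact mul_pos h2 (hxv j)
    have hprodA : ∏ j ∈ Finset.range k, f j = (-1:ℝ)^k * ∏ j ∈ Finset.range k, (-(f j)) := by
      have h5 : ∏ j ∈ Finset.range k, (-(f j)) = (-1:ℝ)^k * ∏ j ∈ Finset.range k, f j := by
        calc ∏ j ∈ Finset.range k, (-(f j)) = ∏ j ∈ Finset.range k, ((-1:ℝ) * f j) :=
              Finset.prod_congr rfl fun j _ => by ring
          _ = (∏ _j ∈ Finset.range k, (-1:ℝ)) * ∏ j ∈ Finset.range k, f j :=
              Finset.prod_mul_distrib
          _ = (-1:ℝ)^k * ∏ j ∈ Finset.range k, f j := by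
              rw [Finset.prod_const, Finset.card_range]
      rw [h5, ← mul_assoc, ← mul_pow]
      norm_num
    have hApos : 0 < ∏ j ∈ Finset.range k, (-(f j)) :=
      Finset.prod_pos fun j hj => by linarith [hneg j hj]
    have hBpos : 0 < ∏ j ∈ Finset.Ico (k+1) (d+1), f j := Finset.prod_pos hpos
    have hval : 0 ≤ (-1)^k * ∏ j ∈ s.erase k, f j := by
      rw [hsplit, Finset.prod_union hdisj, hprodA]
      have h4 : ((-1:ℝ)^k) * ((-1:ℝ)^k * (∏ j ∈ Finset.range k, (-(f j)))
            * ∏ j ∈ Finset.Ico (k+1) (d+1), f j)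
          = ((-1:ℝ)^k)^2 * ((∏ j ∈ Finset.range k, (-(f j)))
            * ∏ j ∈ Finset.Ico (k+1) (d+1), f j) := by ring
      rw [h4]
      exact mul_nonneg (sq_nonneg _) (le_of_lt (mul_pos hApos hBpos))
    rw [← abs_of_nonneg hval, abs_mul, abs_pow, abs_neg, abs_one, one_pow, one_mul]
  have hb1 : |p.eval x| ≤ ∑ k ∈ s, |(Lagrange.basis s v k).eval x| := by
    rw [hx0]
    refine (Finset.abs_sum_le_sum_abs _ _).trans (Finset.sum_le_sum fun k _ => ?_)
    rw [abs_mul]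
    have h1 := hp (v k) (hvle k)
    nlinarith [abs_nonneg ((Lagrange.basis s v k).eval x), abs_nonneg (p.eval (v k))]
  have hT : Polynomial.Chebyshev.T ℝ d = Lagrange.interpolate s v (fun k => (-1:ℝ)^k) := by
    refine Lagrange.eq_interpolate_of_eval_eq _ hinj ?_ ?_
    · rw [hs, Finset.card_range]
      refine lt_of_le_of_lt (T_deg_pair d).1 ?_
      exact_mod_cast Nat.lt_succ_self d
    · intro k hk
      show (Polynomial.Chebyshev.T ℝ (d:ℤ)).eval (Real.cos ((k:ℝ) * π / d)) = (-1:ℝ)^k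
      rw [Polynomial.Chebyshev.T_real_cos]
      rw [show ((d:ℤ):ℝ) * ((k:ℝ) * π / d) = (k:ℝ) * π by push_cast; field_simp]
      simpa using Real.cos_add_nat_mul_pi 0 k
  have hsum : ∑ k ∈ s, |(Lagrange.basis s v k).eval x|
      = (Polynomial.Chebyshev.T ℝ d).eval x := by
    rw [hT, Lagrange.interpolate_apply, eval_finset_sum]
    refine Finset.sum_congr rfl fun k hk => ?_
    rw [eval_mul, eval_C]
    exact hsign k hk
  set t := Real.sqrt (2*μ + μ^2) with ht
  have ht0 : 0 ≤ t := Real.sqrt_nonneg _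
  set u := Real.arsinh (Real.sqrt (x^2 - 1)) with hu
  have hx2sq : 0 ≤ x^2 - 1 := by nlinarith
  have hcoshu : Real.cosh u = x := by
    rw [hu, Real.cosh_arsinh, Real.sq_sqrt hx2sq,
      show 1 + (x^2 - 1) = x^2 by ring]
    exact Real.sqrt_sq (by linarith)
  have hu0 : 0 ≤ u := Real.arsinh_nonneg_iff.mpr (Real.sqrt_nonneg _)
  have hut : u ≤ t := by
    have h1 : u ≤ Real.sinh u := Real.self_le_sinh_iff.mpr hu0
    rw [hu, Real.sinh_arsinh] at h1
    refine h1.trans ?_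
    rw [ht]
    exact Real.sqrt_le_sqrt (by nlinarith)
  have hTx : (Polynomial.Chebyshev.T ℝ d).eval x = Real.cosh (d * u) := by
    rw [← hcoshu]
    exact (T_cosh_pair d u).1
  have hdu : 0 ≤ (d:ℝ) * u := mul_nonneg hdpos.le hu0
  have hcexp : Real.cosh ((d:ℝ) * u) ≤ Real.exp ((d:ℝ) * u) := by
    rw [Real.cosh_eq]
    have h2 := Real.exp_le_exp.mpr (show -((d:ℝ)*u) ≤ (d:ℝ)*u by linarith)
    linarith
  calc |p.eval x| ≤ ∑ k ∈ s, |(Lagrange.basis s v k).eval x| := hb1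
    _ = (Polynomial.Chebyshev.T ℝ d).eval x := hsum
    _ = Real.cosh ((d:ℝ) * u) := hTx
    _ ≤ Real.exp ((d:ℝ) * u) := hcexp
    _ ≤ Real.exp (2 * (d:ℝ) * t) := by
        refine Real.exp_le_exp.mpr ?_
        nlinarith [mul_le_mul_of_nonneg_left hut hdpos.le, mul_nonneg hdpos.le ht0]

/-- Paturi's lemma. -/
theorem paturi (p : Polynomial ℝ) (hp : ∀ x : ℝ, |x| ≤ 1 → |p.eval x| ≤ 1) :
    ∀ μ : ℝ, 0 ≤ μ → ∀ x : ℝ, |x| ≤ 1 + μ →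
      |p.eval x| ≤ Real.exp (2 * (p.natDegree : ℝ) * Real.sqrt (2 * μ + μ ^ 2)) := by
  intro μ hμ x hx
  have hE : (1:ℝ) ≤ Real.exp (2 * (p.natDegree : ℝ) * Real.sqrt (2 * μ + μ ^ 2)) :=
    Real.one_le_exp (by positivity)
  by_cases hx1 : |x| ≤ 1
  · exact (hp x hx1).trans hE
  push_neg at hx1
  rcases Nat.eq_zero_or_pos p.natDegree with h0 | hd
  · obtain ⟨c, rfl⟩ := Polynomial.natDegree_eq_zero.mp h0
    have h1 := hp 0 (by norm_num)
    simp only [Polynomial.eval_C] at h1 ⊢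
    exact h1.trans (by simpa [h0] using hE)
  rcases le_or_gt x 0 with hneg | hposx
  · set q := p.comp (-X) with hq
    have hq1 : ∀ y : ℝ, |y| ≤ 1 → |q.eval y| ≤ 1 := by
      intro y hy
      rw [hq, Polynomial.eval_comp]
      simp only [eval_neg, eval_X]
      exact hp (-y) (by rwa [abs_neg])
    have hqd : q.natDegree = p.natDegree := by
      rw [hq, Polynomial.natDegree_comp]
      simp
    have hxn : 1 < -x := by rwa [abs_of_nonpos hneg] at hx1
    have hxn2 : -x ≤ 1 + μ := by rwa [abs_of_nonpos hneg] at hx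
    have h2 := paturi_aux q hq1 (hqd ▸ hd) μ hμ (-x) hxn hxn2
    rw [hqd] at h2
    have hqe : q.eval (-x) = p.eval x := by
      rw [hq, Polynomial.eval_comp]; simp
    rwa [hqe] at h2
  · have hx1' : 1 < x := by rwa [abs_of_pos hposx] at hx1
    exact paturi_aux p hp hd μ hμ x hx1' (abs_of_pos hposx ▸ hx)
end

section
/- Let p be a real polynomial of degree d, a < b, and suppose max_{x,y ∈ [a,b]} |p(x) - p(y)| ≥ H. Let ε ≤ 1/(100 d²) and a' := a + ε(b-a). Then max_{x,y ∈ [a',b]} |p(x) - p(y)| ≥ H/2. -/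
/-!
Normalize `p` on the shrunken interval `[a', b]`, `a' = a + ε (b - a)`, to a polynomial `q` with
`|q| ≤ 1` on `[-1, 1]`, the point `a'` going to `1`. By the extremal property of Chebyshev
polynomials, `|q x| ≤ T_d x` for `x ≥ 1`; the points of `[a, a']` go to `x ≤ 1 + 2ε / (1 - ε)`, where
`T_d x = cosh (d · arcosh x) ≤ exp (d² (x - 1)) ≤ 2`. So on all of `[a, b]`, `p` deviates from the
midpoint of its range on `[a', b]` by at most the length of that range.
-/

open Polynomial Real Set

theorem Real.sq_div_two_le_cosh_sub_one {t : ℝ} (ht : 0 ≤ t) : t ^ 2 / 2 ≤ cosh t - 1 := by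
  have hsinh : t / 2 ≤ sinh (t / 2) := self_le_sinh_iff.2 (by linarith)
  have hcosh : cosh t = 1 + 2 * sinh (t / 2) ^ 2 := by
    rw [show t = 2 * (t / 2) by ring, cosh_two_mul, cosh_sq]; ring_nf
  nlinarith

namespace Polynomial.Chebyshev

theorem eval_T_real_le_exp (n : ℕ) {x : ℝ} (hx : 1 ≤ x) :
    (T ℝ n).eval x ≤ exp (n ^ 2 * (x - 1)) := by
  have ht : 0 ≤ arcosh x := arcosh_nonneg hx
  calc (T ℝ n).eval x = cosh (n * arcosh x) := by
        rw [← cosh_arcosh hx, T_real_cosh, arcosh_cosh ht]; norm_cast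
    _ ≤ exp ((n * arcosh x) ^ 2 / 2) := cosh_le_exp_half_sq _
    _ = exp (n ^ 2 * (arcosh x ^ 2 / 2)) := by ring_nf
    _ ≤ exp (n ^ 2 * (x - 1)) := by
        gcongr
        simpa only [cosh_arcosh hx] using sq_div_two_le_cosh_sub_one ht

theorem abs_eval_le_eval_T_real {n : ℕ} {P : ℝ[X]} (hPdeg : P.degree ≤ n)
    (hPbnd : ∀ x ∈ Icc (-1) 1, |P.eval x| ≤ 1) {x : ℝ} (hx : 1 ≤ x) :
    |P.eval x| ≤ (T ℝ n).eval x := by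
  have hupper := eval_iterate_derivative_le_of_forall_abs_le_one (k := 0) hx hPdeg hPbnd
  have hlower := eval_iterate_derivative_le_of_forall_abs_le_one (k := 0) hx
    (P := -P) (by rwa [degree_neg]) (by simpa only [eval_neg, abs_neg] using hPbnd)
  simp only [Function.iterate_zero, id, eval_neg] at hupper hlower
  exact abs_le.2 ⟨by linarith, hupper⟩

theorem abs_eval_le_mul_eval_T_real {n : ℕ} {P : ℝ[X]} {M : ℝ} (hPdeg : P.degree ≤ n)
    (hPbnd : ∀ x ∈ Icc (-1) 1, |P.eval x| ≤ M) {x : ℝ} (hx : 1 ≤ x) :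
    |P.eval x| ≤ M * (T ℝ n).eval x := by
  rcases (abs_nonneg _).trans (hPbnd 0 (by norm_num)) |>.eq_or_lt with rfl | hM
  · have hP : P = 0 := eq_zero_of_infinite_isRoot P <|
      (Icc_infinite (by norm_num : (-1 : ℝ) < 1)).mono fun w hw => abs_nonpos_iff.1 (hPbnd w hw)
    simp [hP]
  · have hscaled := abs_eval_le_eval_T_real (P := Polynomial.C M⁻¹ * P)
      ((degree_C_mul (inv_ne_zero hM.ne')).le.trans hPdeg) (x := x) ?_ hx
    · rwa [eval_mul, eval_C, abs_mul, abs_of_pos (inv_pos.2 hM), inv_mul_le_iff₀ hM] at hscaled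
    · intro w hw
      rw [eval_mul, eval_C, abs_mul, abs_of_pos (inv_pos.2 hM), inv_mul_le_iff₀ hM, mul_one]
      exact hPbnd w hw

end Polynomial.Chebyshev

theorem Polynomial.abs_eval_sub_le_mul_exp_of_le {p : ℝ[X]} {n : ℕ} (hp : p.natDegree ≤ n)
    {A b m R : ℝ} (hAb : A < b) (hR : ∀ w ∈ Icc A b, |p.eval w - m| ≤ R) {z : ℝ} (hz : z ≤ A) :
    |p.eval z - m| ≤ R * exp (n ^ 2 * (2 * (A - z) / (b - A))) := by
  set ℓ : ℝ[X] := C (-((b - A) / 2)) * X + C ((A + b) / 2)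
  have hℓ : ∀ w, ℓ.eval w = (A + b) / 2 - (b - A) / 2 * w := fun w => by
    simp only [ℓ, eval_add, eval_mul, eval_C, eval_X]; ring
  set q := (p - C m).comp ℓ
  have hq : ∀ w, q.eval w = p.eval (ℓ.eval w) - m := fun w => by simp [q]
  have hqdeg : q.degree ≤ n := by
    refine degree_le_of_natDegree_le (natDegree_comp_le.trans ?_)
    have := natDegree_linear_le (a := -((b - A) / 2)) (b := (A + b) / 2)
    have : (p - C m).natDegree ≤ n := (natDegree_sub_le _ _).trans (by simpa using hp)
    nlinarith
  have hqbnd : ∀ w ∈ Icc (-1) 1, |q.eval w| ≤ R := fun w hw => by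
    rw [hq]; exact hR _ ⟨by rw [hℓ]; nlinarith [hw.2], by rw [hℓ]; nlinarith [hw.1]⟩
  set x₀ := 1 + 2 * (A - z) / (b - A)
  have hx₀ : 1 ≤ x₀ := le_add_of_nonneg_right (div_nonneg (by linarith) (by linarith))
  have hzx₀ : ℓ.eval x₀ = z := by
    have : b - A ≠ 0 := (sub_pos.2 hAb).ne'
    rw [hℓ, show x₀ = 1 + 2 * (A - z) / (b - A) from rfl]; field_simp; ring
  calc |p.eval z - m| = |q.eval x₀| := by rw [hq, hzx₀]
    _ ≤ R * (Chebyshev.T ℝ n).eval x₀ := Chebyshev.abs_eval_le_mul_eval_T_real hqdeg hqbnd hx₀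
    _ ≤ R * exp (n ^ 2 * (2 * (A - z) / (b - A))) := by
        gcongr
        · exact (abs_nonneg _).trans (hqbnd 0 (by norm_num))
        · simpa [x₀] using Chebyshev.eval_T_real_le_exp n hx₀

theorem Polynomial.exists_abs_sub_le_two_mul_sub {p : ℝ[X]} {n : ℕ} (hp : p.natDegree ≤ n)
    {a A b : ℝ} (hAb : A < b) (hgap : n ^ 2 * (2 * (A - a) / (b - A)) ≤ log 2) :
    ∃ u ∈ Icc A b, ∃ v ∈ Icc A b, ∀ x ∈ Icc a b, ∀ y ∈ Icc a b,
      |p.eval x - p.eval y| ≤ 2 * (p.eval u - p.eval v) := by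
  obtain ⟨u, hu, hmax⟩ := isCompact_Icc.exists_isMaxOn (nonempty_Icc.2 hAb.le)
    p.continuous.continuousOn
  obtain ⟨v, hv, hmin⟩ := isCompact_Icc.exists_isMinOn (nonempty_Icc.2 hAb.le)
    p.continuous.continuousOn
  replace hmax : ∀ w ∈ Icc A b, p.eval w ≤ p.eval u := isMaxOn_iff.1 hmax
  replace hmin : ∀ w ∈ Icc A b, p.eval v ≤ p.eval w := isMinOn_iff.1 hmin
  set m := (p.eval u + p.eval v) / 2 with hm
  set D := p.eval u - p.eval v with hD
  have hnear : ∀ w ∈ Icc A b, |p.eval w - m| ≤ D / 2 := fun w hw =>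
    abs_le.2 ⟨by linarith [hmin w hw], by linarith [hmax w hw]⟩
  have hD0 : 0 ≤ D := by linarith [abs_nonneg (p.eval u - m), hnear u hu]
  have hfar : ∀ z ∈ Icc a b, |p.eval z - m| ≤ D := by
    intro z hz
    rcases le_total A z with hAz | hzA
    · linarith [hnear z ⟨hAz, hz.2⟩]
    have hexp : (n : ℝ) ^ 2 * (2 * (A - z) / (b - A)) ≤ log 2 :=
      le_trans (by gcongr; exact hz.1) hgap
    calc |p.eval z - m| ≤ D / 2 * exp (n ^ 2 * (2 * (A - z) / (b - A))) :=
          abs_eval_sub_le_mul_exp_of_le hp hAb hnear hzA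
      _ ≤ D / 2 * 2 := by grw [hexp, exp_log two_pos]
      _ = D := by ring
  refine ⟨u, hu, v, hv, fun x hx y hy => ?_⟩
  calc |p.eval x - p.eval y| ≤ |p.eval x - m| + |m - p.eval y| := abs_sub_le _ _ _
    _ ≤ D + D := by rw [abs_sub_comm m]; exact add_le_add (hfar x hx) (hfar y hy)
    _ = 2 * D := by ring

theorem range_shrink_general (p : Polynomial ℝ) (d : ℕ) (hd : p.natDegree = d)
    (a b H ε : ℝ) (hab : a < b) (hε : 0 < ε) (hε' : ε ≤ 1 / (100 * (d : ℝ) ^ 2))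
    (hrange : ∃ x ∈ Set.Icc a b, ∃ y ∈ Set.Icc a b, H ≤ |p.eval x - p.eval y|) :
    ∃ x ∈ Set.Icc (a + ε * (b - a)) b, ∃ y ∈ Set.Icc (a + ε * (b - a)) b,
      H / 2 ≤ |p.eval x - p.eval y| := by
  obtain ⟨x, hx, y, hy, hxy⟩ := hrange
  have hd1 : (1 : ℝ) ≤ d := by
    rcases Nat.eq_zero_or_pos d with rfl | hd0
    · norm_num at hε'; linarith
    · exact_mod_cast hd0
  have hεd : ε * d ^ 2 ≤ 1 / 100 := by
    rw [le_div_iff₀ (by positivity)] at hε'; linarith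
  have hε1 : ε ≤ 1 / 100 := (le_mul_of_one_le_right hε.le (one_le_pow₀ hd1)).trans hεd
  have hba : 0 < b - a := sub_pos.2 hab
  have hAb : a + ε * (b - a) < b := by nlinarith
  have hgap : (d : ℝ) ^ 2 * (2 * (a + ε * (b - a) - a) / (b - (a + ε * (b - a)))) ≤ log 2 := by
    rw [show 2 * (a + ε * (b - a) - a) = 2 * ε * (b - a) by ring,
      show b - (a + ε * (b - a)) = (1 - ε) * (b - a) by ring, mul_div_mul_right _ _ hba.ne',
      mul_div_assoc', div_le_iff₀ (by linarith)]
    nlinarith [log_two_gt_d9]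
  obtain ⟨u, hu, v, hv, hosc⟩ := exists_abs_sub_le_two_mul_sub hd.le hAb hgap
  exact ⟨u, hu, v, hv, by linarith [hosc x hx y hy, le_abs_self (p.eval u - p.eval v)]⟩

/-- Shrinking the domain slightly can only modestly shrink the range. -/
theorem range_shrink (p : Polynomial ℝ) (d : ℕ) (hd : p.natDegree = d) (hd1 : 1 ≤ d)
    (a b H ε : ℝ) (hab : a < b) (hH : 0 ≤ H) (hε : 0 < ε) (hε' : ε ≤ 1 / (100 * (d : ℝ) ^ 2))
    (hrange : ∃ x ∈ Set.Icc a b, ∃ y ∈ Set.Icc a b, H ≤ |p.eval x - p.eval y|) :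
    ∃ x ∈ Set.Icc (a + ε * (b - a)) b, ∃ y ∈ Set.Icc (a + ε * (b - a)) b,
      H / 2 ≤ |p.eval x - p.eval y| :=
  range_shrink_general p d hd a b H ε hab hε hε' hrange
end

section
/- Let p be a real polynomial of degree at most √N that is bounded: |p(k)| ≤ 1 for all integers k ∈ {0, 1, …, N}. Then |p(x)| ≤ 4 for all real x ∈ [0, N]. -/
/-!
Write `x = m + u` with `m = ⌊x⌋ < N` and interpolate `p` at the `a + b + 2` integer nodes
`m - j ^ 2` (`j ≤ a`) and `m + 1 + j ^ 2` (`j ≤ b`); they lie in `[0, N]` and outnumber `deg p`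
for suitable `a`, `b` because `deg p ≤ √N`. As the nodes spread out quadratically,
the Lagrange basis function of the `i`-th node on one side is `O(1 / i ^ 4)` at `x`. If `w` and
`w'` are the distances from `x` to the innermost nodes of the other side and of its own side, the
factors from the other side multiply to at most `w / (1 + i ^ 2)`, and those from its own side to
at most `2 w' (1 + 3 w') / i ^ 2` for `i ≥ 1`: the `2` comes from `(b !) ^ 2 ≤ (b - i)! (b + i)!`
and the `3` from `∏ (1 + 1 / j ^ 2) ≤ 4`. Summing, with `∑ 1 / (i ^ 2 (i ^ 2 + 1)) ≤ 3 / 5`, the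
Lebesgue function at `x` is at most `g u + g (1 - u) ≤ 4`, where
`g u = u (1 + 3 (1 - u)) (1 + 6 (1 - u) / 5)`.
-/

open Finset Polynomial
open scoped Nat

theorem abs_eval_le_mul_sum_prod {ι : Type*} [DecidableEq ι] {s : Finset ι} {v : ι → ℝ}
    (hvs : Set.InjOn v s) {p : ℝ[X]} (hp : p.degree < #s) {M : ℝ}
    (hM : ∀ i ∈ s, |p.eval (v i)| ≤ M) (x : ℝ) :
    |p.eval x| ≤ M * ∑ i ∈ s, ∏ j ∈ s.erase i, |x - v j| / |v i - v j| := by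
  have hbasis : ∀ i, |(Lagrange.basis s v i).eval x| =
      ∏ j ∈ s.erase i, |x - v j| / |v i - v j| := fun i => by
    simp only [Lagrange.basis, Lagrange.basisDivisor, eval_prod, eval_mul, eval_C, eval_sub,
      eval_X, abs_prod, abs_mul, abs_inv, div_eq_inv_mul]
  conv_lhs => rw [Lagrange.eq_interpolate hvs hp]
  rw [Lagrange.interpolate_apply, eval_finsetSum, mul_sum]
  refine (abs_sum_le_sum_abs _ _).trans (sum_le_sum fun i hi => ?_)
  rw [eval_mul, eval_C, abs_mul, ← hbasis]
  exact mul_le_mul_of_nonneg_right (hM i hi) (abs_nonneg _)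

/-- The left side is a polynomial in `w` with nonnegative coefficients, hence convex, and agrees
with the right side at `w = 0` and `w = 1`. -/
theorem prod_one_add_mul_le {ι : Type*} {s : Finset ι} {t : ι → ℝ} (ht : ∀ j ∈ s, 0 ≤ t j)
    {w : ℝ} (hw0 : 0 ≤ w) (hw1 : w ≤ 1) :
    ∏ j ∈ s, (1 + w * t j) ≤ 1 + w * (∏ j ∈ s, (1 + t j) - 1) := by
  induction s using Finset.cons_induction with
  | empty => simp
  | cons a s _ ih =>
    rw [prod_cons, prod_cons]
    have hta : 0 ≤ t a := ht a (mem_cons_self a s)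
    have hts : ∀ j ∈ s, 0 ≤ t j := fun j hj => ht j (mem_cons_of_mem hj)
    have hP : 1 ≤ ∏ j ∈ s, (1 + t j) := one_le_prod fun j hj => by linarith [hts j hj]
    calc (1 + w * t a) * ∏ j ∈ s, (1 + w * t j)
        ≤ (1 + w * t a) * (1 + w * (∏ j ∈ s, (1 + t j) - 1)) :=
          mul_le_mul_of_nonneg_left (ih hts) (by nlinarith)
      _ ≤ 1 + w * ((1 + t a) * ∏ j ∈ s, (1 + t j) - 1) := by
          nlinarith [mul_nonneg (mul_nonneg (mul_nonneg hw0 hta) (sub_nonneg.2 hP))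
            (sub_nonneg.2 hw1)]

theorem prod_Icc_one_add_inv_sq_le_four (n : ℕ) :
    ∏ j ∈ Icc 1 n, (1 + 1 / (j : ℝ) ^ 2) ≤ 4 := by
  -- for `j ≥ 2`, `1 + 1 / j ^ 2 ≤ j ^ 2 / (j ^ 2 - 1)`, whose product over `2 ≤ j ≤ n` telescopes
  -- to `2 n / (n + 1)`
  suffices h : ∀ n : ℕ, 1 ≤ n → ∏ j ∈ Icc 1 n, (1 + 1 / (j : ℝ) ^ 2) ≤ 4 - 4 / ((n : ℝ) + 1) by
    rcases Nat.eq_zero_or_pos n with rfl | hn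
    · norm_num
    · linarith [h n hn, show (0 : ℝ) < 4 / ((n : ℝ) + 1) by positivity]
  refine Nat.le_induction (by norm_num) fun n _ ih => ?_
  rw [prod_Icc_succ_top (by omega)]
  push_cast
  have hgap : (4 - 4 / ((n : ℝ) + 1)) * (1 + 1 / ((n : ℝ) + 1) ^ 2)
      = 4 - 4 / ((n : ℝ) + 1 + 1) - 4 / (((n : ℝ) + 1) ^ 3 * (n + 2)) := by
    field_simp
    ring
  calc (∏ j ∈ Icc 1 n, (1 + 1 / (j : ℝ) ^ 2)) * (1 + 1 / ((n : ℝ) + 1) ^ 2)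
      ≤ (4 - 4 / ((n : ℝ) + 1)) * (1 + 1 / ((n : ℝ) + 1) ^ 2) :=
        mul_le_mul_of_nonneg_right ih (by positivity)
    _ ≤ 4 - 4 / ((n : ℝ) + 1 + 1) := by
        rw [hgap]
        linarith [show 0 < 4 / (((n : ℝ) + 1) ^ 3 * (n + 2)) by positivity]

theorem prod_one_add_div_sq_le {s : Finset ℕ} {n : ℕ} (hs : s ⊆ Icc 1 n) {w : ℝ} (hw0 : 0 ≤ w)
    (hw1 : w ≤ 1) : ∏ j ∈ s, (1 + w / (j : ℝ) ^ 2) ≤ 1 + 3 * w := by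
  have h4 : ∏ j ∈ s, (1 + 1 / (j : ℝ) ^ 2) ≤ 4 :=
    (prod_le_prod_of_subset_of_one_le hs (fun _ _ => by positivity)
      fun _ _ _ => le_add_of_nonneg_right (by positivity)).trans
      (prod_Icc_one_add_inv_sq_le_four n)
  have := prod_one_add_mul_le (s := s) (t := fun j => 1 / (j : ℝ) ^ 2)
    (fun _ _ => by positivity) hw0 hw1
  simp only [mul_one_div] at this
  nlinarith

theorem sum_Icc_inv_sq_mul_sq_add_one_le (n : ℕ) :
    ∑ i ∈ Icc 1 n, 1 / ((i : ℝ) ^ 2 * ((i : ℝ) ^ 2 + 1)) ≤ 3 / 5 := by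
  -- from `i = 2` on, the `i`-th term is at most `1 / (10 (i - 1)) - 1 / (10 i)`
  suffices h : ∀ n : ℕ, 1 ≤ n →
      ∑ i ∈ Icc 1 n, 1 / ((i : ℝ) ^ 2 * ((i : ℝ) ^ 2 + 1)) ≤ 3 / 5 - 1 / (10 * (n : ℝ)) by
    rcases Nat.eq_zero_or_pos n with rfl | hn
    · norm_num
    · linarith [h n hn, show (0 : ℝ) < 1 / (10 * (n : ℝ)) by positivity]
  refine Nat.le_induction (by norm_num) fun n hn ih => ?_
  rw [sum_Icc_succ_top (by omega)]
  have hn' : (1 : ℝ) ≤ n := by exact_mod_cast hn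
  have step : 1 / (((n + 1 : ℕ) : ℝ) ^ 2 * (((n + 1 : ℕ) : ℝ) ^ 2 + 1))
      ≤ 1 / (10 * n) - 1 / (10 * ((n + 1 : ℕ) : ℝ)) := by
    push_cast
    rw [div_sub_div _ _ (by positivity) (by positivity),
      div_le_div_iff₀ (by positivity) (by positivity)]
    nlinarith [sq_nonneg ((n : ℝ) - 1), mul_nonneg (sub_nonneg.2 hn') (sq_nonneg (n : ℝ))]
  linarith

theorem prod_add_sq_le {s : Finset ℕ} {n : ℕ} (hs : s ⊆ Icc 1 n) {w : ℝ} (hw0 : 0 ≤ w)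
    (hw1 : w ≤ 1) : ∏ j ∈ s, (w + (j : ℝ) ^ 2) ≤ (1 + 3 * w) * ∏ j ∈ s, (j : ℝ) ^ 2 := by
  have hpos : ∀ j ∈ s, (0 : ℝ) < (j : ℝ) ^ 2 := fun j hj => by
    have := (mem_Icc.1 (hs hj)).1
    positivity
  calc ∏ j ∈ s, (w + (j : ℝ) ^ 2)
      = (∏ j ∈ s, (1 + w / (j : ℝ) ^ 2)) * ∏ j ∈ s, (j : ℝ) ^ 2 := by
        rw [← prod_mul_distrib]
        refine prod_congr rfl fun j hj => ?_
        rw [one_add_div (hpos j hj).ne', div_mul_cancel₀ _ (hpos j hj).ne', add_comm]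
    _ ≤ (1 + 3 * w) * ∏ j ∈ s, (j : ℝ) ^ 2 :=
        mul_le_mul_of_nonneg_right (prod_one_add_div_sq_le hs hw0 hw1)
          (prod_nonneg fun j hj => (hpos j hj).le)

theorem factorial_sq_le_factorial_sub_mul_factorial_add {b i : ℕ} (hib : i ≤ b) :
    b ! ^ 2 ≤ (b - i)! * (b + i)! := by
  have hdesc := Nat.factorial_mul_descFactorial hib
  have hasc := Nat.factorial_mul_ascFactorial b i
  have hle : b.descFactorial i ≤ (b + 1).ascFactorial i :=
    (Nat.descFactorial_le_pow b i).trans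
      ((Nat.pow_le_pow_left b.le_succ i).trans (Nat.pow_succ_le_ascFactorial (b + 1) i))
  calc b ! ^ 2 = (b - i)! * b ! * b.descFactorial i := by rw [← hdesc]; ring
    _ ≤ (b - i)! * b ! * (b + 1).ascFactorial i := Nat.mul_le_mul_left _ hle
    _ = (b - i)! * (b + i)! := by rw [← hasc]; ring

theorem prod_Icc_sq_eq_factorial_sq (b : ℕ) : ∏ j ∈ Icc 1 b, (j : ℝ) ^ 2 = (b ! : ℝ) ^ 2 := by
  rw [prod_pow, ← Ico_add_one_right_eq_Icc, ← prod_Ico_id_eq_factorial, Nat.cast_prod]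

theorem two_mul_prod_range_sq_sub_sq {i : ℕ} (hi : 0 < i) :
    2 * ∏ j ∈ range i, ((i : ℝ) ^ 2 - j ^ 2) = (2 * i)! := by
  obtain ⟨n, rfl⟩ : ∃ n, i = n + 1 := ⟨i - 1, by omega⟩
  have hsub : ∏ j ∈ range (n + 1), (((n + 1 - j : ℕ)) : ℝ) = (n + 1)! := by
    rw [← prod_range_add_one_eq_factorial, Nat.cast_prod, ← prod_range_reflect]
    refine prod_congr rfl fun j hj => ?_
    rw [mem_range] at hj
    congr 1
    omega
  have hadd : ∏ j ∈ range (n + 1), (((n + 1 + j : ℕ)) : ℝ) = (n + 1).ascFactorial (n + 1) := by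
    rw [Nat.ascFactorial_eq_prod_range, Nat.cast_prod]
  have hfac : (2 * (n + 1))! = 2 * ((n + 1) ! * (n + 1).ascFactorial (n + 1)) := by
    rw [show 2 * (n + 1) = n + (n + 1) + 1 by ring, Nat.factorial_succ,
      ← Nat.factorial_mul_ascFactorial n (n + 1), Nat.factorial_succ n]
    ring
  calc 2 * ∏ j ∈ range (n + 1), (((n + 1 : ℕ) : ℝ) ^ 2 - j ^ 2)
      = 2 * ∏ j ∈ range (n + 1), (((n + 1 - j : ℕ)) : ℝ) * ((n + 1 + j : ℕ) : ℝ) := by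
        congr 1
        refine prod_congr rfl fun j hj => ?_
        rw [mem_range] at hj
        push_cast [Nat.cast_sub hj.le]
        ring
    _ = (2 * (n + 1))! := by
        rw [prod_mul_distrib, hsub, hadd, hfac]
        push_cast
        ring

theorem two_mul_prod_abs_sq_sub_sq {i b : ℕ} (hi : 0 < i) (hib : i ≤ b) :
    2 * ∏ j ∈ (range (b + 1)).erase i, |(i : ℝ) ^ 2 - j ^ 2| = ((b - i)! * (b + i)! : ℕ) := by
  induction b, hib using Nat.le_induction with
  | base =>
    rw [range_add_one, erase_insert notMem_range_self, Nat.sub_self, Nat.factorial_zero,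
      one_mul, ← two_mul, ← two_mul_prod_range_sq_sub_sq hi]
    congr 1
    refine prod_congr rfl fun j hj => abs_of_nonneg ?_
    have : (j : ℝ) ≤ i := by exact_mod_cast (mem_range.1 hj).le
    nlinarith
  | succ b hib ih =>
    have hb : b + 1 ∉ (range (b + 1)).erase i := by simp
    rw [range_add_one, erase_insert_of_ne (by omega), prod_insert hb, mul_left_comm, ih,
      show b + 1 - i = b - i + 1 by omega, Nat.factorial_succ (b - i),
      show b + 1 + i = b + i + 1 by omega, Nat.factorial_succ (b + i),
      abs_of_nonpos (by push_cast; nlinarith [(by exact_mod_cast hib : (i : ℝ) ≤ b)])]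
    push_cast [Nat.cast_sub hib]
    ring

/-- For the nodes `m - j ^ 2` (`j ≤ a`) and `m + 1 + j ^ 2` (`j ≤ b`) and a point `m + u`, the
Lagrange basis function of the node with index `i` on one side is, in absolute value, at `m + u`,
its `sameSideProd` times its `oppSideProd`: the products over the other nodes on its own side and
over the nodes on the opposite side. In each, `w` is the distance from `m + u` to the innermost
node of the side multiplied over (`u` on the left, `1 - u` on the right). -/
noncomputable def sameSideProd (w : ℝ) (b i : ℕ) : ℝ :=
  ∏ j ∈ (range (b + 1)).erase i, (w + j ^ 2) / |(i : ℝ) ^ 2 - j ^ 2|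

noncomputable def oppSideProd (w : ℝ) (a i : ℕ) : ℝ :=
  ∏ j ∈ range (a + 1), (w + j ^ 2) / (1 + i ^ 2 + j ^ 2)

theorem oppSideProd_le {w : ℝ} (hw0 : 0 ≤ w) (hw1 : w ≤ 1) (a i : ℕ) :
    oppSideProd w a i ≤ w / (1 + i ^ 2) := by
  rw [oppSideProd, prod_range_succ']
  have hle :
      ∏ j ∈ range a, (w + ((j + 1 : ℕ) : ℝ) ^ 2) / (1 + i ^ 2 + ((j + 1 : ℕ) : ℝ) ^ 2) ≤ 1 :=
    prod_le_one (fun _ _ => by positivity) fun j _ => by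
      rw [div_le_one (by positivity)]
      nlinarith [sq_nonneg (i : ℝ)]
  simpa using mul_le_of_le_one_left (by positivity) hle

theorem sameSideProd_zero_le {w : ℝ} (hw0 : 0 ≤ w) (hw1 : w ≤ 1) (b : ℕ) :
    sameSideProd w b 0 ≤ 1 + 3 * w := by
  have hsub : (range (b + 1)).erase 0 = Icc 1 b := by ext; simp; omega
  have hpos : 0 < ∏ j ∈ Icc 1 b, (j : ℝ) ^ 2 :=
    prod_pos fun j hj => by have := (mem_Icc.1 hj).1; positivity
  rw [sameSideProd, prod_div_distrib, hsub, div_le_iff₀ (by simpa using hpos)]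
  simpa using prod_add_sq_le subset_rfl hw0 hw1

theorem sameSideProd_le {w : ℝ} (hw0 : 0 ≤ w) (hw1 : w ≤ 1) {b i : ℕ} (hi : 0 < i)
    (hib : i ≤ b) : sameSideProd w b i ≤ 2 * w * (1 + 3 * w) / i ^ 2 := by
  set S := (range (b + 1)).erase i
  have hS0 : 0 ∈ S := by simp [S]; omega
  have hS : S.erase 0 = (Icc 1 b).erase i := by ext; simp [S]; omega
  have hnum : ∏ j ∈ S, (w + (j : ℝ) ^ 2)
      ≤ w * ((1 + 3 * w) * ∏ j ∈ (Icc 1 b).erase i, (j : ℝ) ^ 2) := by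
    rw [← mul_prod_erase S _ hS0, hS]
    simpa using mul_le_mul_of_nonneg_left (prod_add_sq_le (erase_subset i _) hw0 hw1) hw0
  have hden : (i : ℝ) ^ 2 * ∏ j ∈ (Icc 1 b).erase i, (j : ℝ) ^ 2
      ≤ 2 * ∏ j ∈ S, |(i : ℝ) ^ 2 - j ^ 2| := by
    rw [mul_prod_erase _ (fun j : ℕ => (j : ℝ) ^ 2) (by simp; omega),
      prod_Icc_sq_eq_factorial_sq, two_mul_prod_abs_sq_sub_sq hi hib]
    exact_mod_cast factorial_sq_le_factorial_sub_mul_factorial_add hib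
  have hpos : 0 < ∏ j ∈ S, |(i : ℝ) ^ 2 - j ^ 2| := by
    refine prod_pos fun j hj => abs_pos.2 fun h => (mem_erase.1 hj).1 ?_
    exact Nat.pow_left_injective two_ne_zero (by exact_mod_cast (sub_eq_zero.1 h).symm)
  rw [sameSideProd, prod_div_distrib, div_le_div_iff₀ hpos (by positivity)]
  calc (∏ j ∈ S, (w + (j : ℝ) ^ 2)) * i ^ 2
      ≤ w * ((1 + 3 * w) * ∏ j ∈ (Icc 1 b).erase i, (j : ℝ) ^ 2) * i ^ 2 :=
        mul_le_mul_of_nonneg_right hnum (by positivity)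
    _ = w * (1 + 3 * w) * ((i : ℝ) ^ 2 * ∏ j ∈ (Icc 1 b).erase i, (j : ℝ) ^ 2) := by ring
    _ ≤ w * (1 + 3 * w) * (2 * ∏ j ∈ S, |(i : ℝ) ^ 2 - j ^ 2|) :=
        mul_le_mul_of_nonneg_left hden (by positivity)
    _ = 2 * w * (1 + 3 * w) * ∏ j ∈ S, |(i : ℝ) ^ 2 - j ^ 2| := by ring

theorem sum_oppSideProd_mul_sameSideProd_le {w w' : ℝ} (hw0 : 0 ≤ w) (hw1 : w ≤ 1)
    (hw'0 : 0 ≤ w') (hw'1 : w' ≤ 1) (a b : ℕ) :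
    ∑ i ∈ range (b + 1), oppSideProd w a i * sameSideProd w' b i
      ≤ w * (1 + 3 * w') * (1 + 6 / 5 * w') := by
  have hsame : ∀ i, 0 ≤ sameSideProd w' b i := fun i => prod_nonneg fun _ _ => by positivity
  have hterm : ∀ i ∈ Icc 1 b, oppSideProd w a i * sameSideProd w' b i
      ≤ 2 * w * w' * (1 + 3 * w') * (1 / ((i : ℝ) ^ 2 * ((i : ℝ) ^ 2 + 1))) := fun i hi => by
    obtain ⟨hi1, hib⟩ := mem_Icc.1 hi
    have hi' : (0 : ℝ) < (i : ℝ) ^ 2 := by positivity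
    calc oppSideProd w a i * sameSideProd w' b i
        ≤ w / (1 + i ^ 2) * (2 * w' * (1 + 3 * w') / i ^ 2) :=
          mul_le_mul (oppSideProd_le hw0 hw1 a i) (sameSideProd_le hw'0 hw'1 hi1 hib) (hsame i)
            (by positivity)
      _ = _ := by field_simp; ring
  have hzero : oppSideProd w a 0 * sameSideProd w' b 0 ≤ w * (1 + 3 * w') := by
    simpa using mul_le_mul (oppSideProd_le hw0 hw1 a 0) (sameSideProd_zero_le hw'0 hw'1 b)
      (hsame 0) (by positivity)
  have hrest : ∑ i ∈ Icc 1 b, oppSideProd w a i * sameSideProd w' b i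
      ≤ 2 * w * w' * (1 + 3 * w') * (3 / 5) := by
    calc ∑ i ∈ Icc 1 b, oppSideProd w a i * sameSideProd w' b i
        ≤ ∑ i ∈ Icc 1 b, 2 * w * w' * (1 + 3 * w') * (1 / ((i : ℝ) ^ 2 * ((i : ℝ) ^ 2 + 1))) :=
          sum_le_sum hterm
      _ ≤ 2 * w * w' * (1 + 3 * w') * (3 / 5) := by
          rw [← mul_sum]
          exact mul_le_mul_of_nonneg_left (sum_Icc_inv_sq_mul_sq_add_one_le b) (by positivity)
  have hsplit : (range (b + 1)).erase 0 = Icc 1 b := by ext; simp; omega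
  rw [← add_sum_erase _ _ (mem_range.2 b.succ_pos), hsplit]
  nlinarith

def twoSidedNodes (m : ℝ) : ℕ ⊕ ℕ → ℝ :=
  Sum.elim (fun j => m - j ^ 2) (fun j => m + 1 + j ^ 2)

theorem twoSidedNodes_injective (m : ℝ) : Function.Injective (twoSidedNodes m) := by
  rintro (i | i) (j | j) h <;> simp [twoSidedNodes] at h ⊢ <;>
    first | exact h | nlinarith [sq_nonneg (i : ℝ), sq_nonneg (j : ℝ)]

theorem sum_prod_twoSidedNodes (m u : ℝ) (hu0 : 0 ≤ u) (hu1 : u ≤ 1) (a b : ℕ) :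
    ∑ k ∈ (range (a + 1)).disjSum (range (b + 1)),
      ∏ l ∈ ((range (a + 1)).disjSum (range (b + 1))).erase k,
        |m + u - twoSidedNodes m l| / |twoSidedNodes m k - twoSidedNodes m l|
      = ∑ i ∈ range (a + 1), sameSideProd u a i * oppSideProd (1 - u) b i
        + ∑ i ∈ range (b + 1), oppSideProd u a i * sameSideProd (1 - u) b i := by
  rw [sum_disjSum]
  congr 1 <;> refine sum_congr rfl fun i _ => ?_
  · rw [show ((range (a + 1)).disjSum (range (b + 1))).erase (Sum.inl i)
        = ((range (a + 1)).erase i).disjSum (range (b + 1)) by ext (j | j) <;> simp, prod_disjSum]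
    congr 1 <;> refine prod_congr rfl fun j _ => ?_ <;>
      simp only [twoSidedNodes, Sum.elim_inl, Sum.elim_inr]
    · rw [show m + u - (m - j ^ 2) = u + j ^ 2 by ring,
        show m - i ^ 2 - (m - j ^ 2) = (j : ℝ) ^ 2 - i ^ 2 by ring,
        abs_of_nonneg (by positivity), abs_sub_comm]
    · rw [show m + u - (m + 1 + j ^ 2) = -(1 - u + j ^ 2) by ring,
        show m - i ^ 2 - (m + 1 + j ^ 2) = -(1 + (i : ℝ) ^ 2 + j ^ 2) by ring, abs_neg, abs_neg,
        abs_of_nonneg (by nlinarith [sq_nonneg (j : ℝ)]), abs_of_pos (by positivity)]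
  · rw [show ((range (a + 1)).disjSum (range (b + 1))).erase (Sum.inr i)
        = (range (a + 1)).disjSum ((range (b + 1)).erase i) by ext (j | j) <;> simp, prod_disjSum]
    congr 1 <;> refine prod_congr rfl fun j _ => ?_ <;>
      simp only [twoSidedNodes, Sum.elim_inl, Sum.elim_inr]
    · rw [show m + u - (m - j ^ 2) = u + j ^ 2 by ring,
        show m + 1 + i ^ 2 - (m - j ^ 2) = 1 + (i : ℝ) ^ 2 + j ^ 2 by ring,
        abs_of_nonneg (by positivity), abs_of_pos (by positivity)]
    · rw [show m + u - (m + 1 + j ^ 2) = -(1 - u + j ^ 2) by ring,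
        show m + 1 + i ^ 2 - (m + 1 + j ^ 2) = (i : ℝ) ^ 2 - j ^ 2 by ring, abs_neg,
        abs_of_nonneg (by nlinarith [sq_nonneg (j : ℝ)])]

theorem abs_eval_le_four_of_mem_Icc {N m a b : ℕ} {p : ℝ[X]}
    (hbound : ∀ k : ℕ, k ≤ N → |p.eval (k : ℝ)| ≤ 1) (ha : a ^ 2 ≤ m) (hb : m + 1 + b ^ 2 ≤ N)
    (hdeg : p.natDegree ≤ a + b + 1) {x : ℝ} (hx : x ∈ Set.Icc (m : ℝ) (m + 1)) :
    |p.eval x| ≤ 4 := by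
  set s := (range (a + 1)).disjSum (range (b + 1))
  have hcard : p.degree < #s := by
    rw [card_disjSum, card_range, card_range]
    exact degree_le_natDegree.trans_lt
      (by exact_mod_cast (by omega : p.natDegree < a + 1 + (b + 1)))
  have hval : ∀ k ∈ s, |p.eval (twoSidedNodes m k)| ≤ 1 := by
    rintro (j | j) hj <;>
      simp only [s, inl_mem_disjSum, inr_mem_disjSum, mem_range] at hj <;>
      simp only [twoSidedNodes, Sum.elim_inl, Sum.elim_inr]
    · have hj2 : j ^ 2 ≤ m := (Nat.pow_le_pow_left (by omega) 2).trans ha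
      rw [← Nat.cast_pow, ← Nat.cast_sub hj2]
      exact hbound _ (by omega)
    · have hj2 : j ^ 2 ≤ b ^ 2 := Nat.pow_le_pow_left (by omega) 2
      exact_mod_cast hbound (m + 1 + j ^ 2) (by omega)
  obtain ⟨u, hu0, hu1, rfl⟩ : ∃ u : ℝ, 0 ≤ u ∧ u ≤ 1 ∧ x = m + u :=
    ⟨x - m, by linarith [hx.1], by linarith [hx.2], by ring⟩
  calc |p.eval (m + u)|
      ≤ 1 * ∑ k ∈ s, ∏ l ∈ s.erase k,
          |m + u - twoSidedNodes m l| / |twoSidedNodes m k - twoSidedNodes m l| :=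
        abs_eval_le_mul_sum_prod (twoSidedNodes_injective m).injOn hcard hval _
    _ = ∑ i ∈ range (a + 1), oppSideProd (1 - u) b i * sameSideProd u a i
        + ∑ i ∈ range (b + 1), oppSideProd u a i * sameSideProd (1 - u) b i := by
        simp only [one_mul, s, sum_prod_twoSidedNodes m u hu0 hu1, mul_comm (sameSideProd _ _ _)]
    _ ≤ (1 - u) * (1 + 3 * u) * (1 + 6 / 5 * u)
        + u * (1 + 3 * (1 - u)) * (1 + 6 / 5 * (1 - u)) :=
        add_le_add (sum_oppSideProd_mul_sameSideProd_le (by linarith) (by linarith) hu0 hu1 b a)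
          (sum_oppSideProd_mul_sameSideProd_le hu0 hu1 (by linarith) (by linarith) a b)
    _ ≤ 4 := by nlinarith [sq_nonneg (2 * u - 1), mul_nonneg hu0 (sub_nonneg.2 hu1)]

theorem exists_sq_le_and_add_sq_le {m N d : ℕ} (hmN : m < N) (hd : d ^ 2 ≤ N) :
    ∃ a b : ℕ, a ^ 2 ≤ m ∧ m + 1 + b ^ 2 ≤ N ∧ d ≤ a + b + 1 := by
  by_cases h : Nat.sqrt m + 1 ≤ d
  · -- `m + 1 + b ^ 2 ≤ (a + 1) ^ 2 + b ^ 2 ≤ (a + 1 + b) ^ 2 = d ^ 2`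
    refine ⟨Nat.sqrt m, d - (Nat.sqrt m + 1), Nat.sqrt_le' m, ?_, by omega⟩
    have hm : m + 1 ≤ (Nat.sqrt m + 1) ^ 2 := Nat.lt_succ_sqrt' m
    obtain ⟨c, rfl⟩ : ∃ c, d = Nat.sqrt m + 1 + c := ⟨d - (Nat.sqrt m + 1), by omega⟩
    rw [Nat.add_sub_cancel_left]
    nlinarith
  · exact ⟨d, 0, Nat.le_sqrt'.1 (by omega), by omega, by omega⟩

theorem bounded_on_integers_general (N : ℕ) (p : Polynomial ℝ)
    (hdeg : (p.natDegree : ℝ) ≤ Real.sqrt N)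
    (hbound : ∀ k : ℕ, k ≤ N → |p.eval (k : ℝ)| ≤ 1) :
    ∀ x ∈ Set.Icc (0 : ℝ) (N : ℝ), |p.eval x| ≤ 4 := by
  rintro x ⟨hx0, hxN⟩
  rcases hxN.eq_or_lt with rfl | hxN
  · exact (hbound N le_rfl).trans (by norm_num)
  have hd : p.natDegree ^ 2 ≤ N := by
    exact_mod_cast (Real.le_sqrt (Nat.cast_nonneg _) (Nat.cast_nonneg _)).1 hdeg
  have hmN : ⌊x⌋₊ < N := (Nat.floor_lt hx0).2 hxN
  obtain ⟨a, b, ha, hb, hab⟩ := exists_sq_le_and_add_sq_le hmN hd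
  exact abs_eval_le_four_of_mem_Icc hbound ha hb hab
    ⟨Nat.floor_le hx0, (Nat.lt_floor_add_one x).le⟩

/-- A polynomial of degree at most √N bounded on the integers 0..N is bounded by 4 on [0,N]. -/
theorem bounded_on_integers (N : ℕ) (hN : 0 < N) (p : Polynomial ℝ)
    (hdeg : (p.natDegree : ℝ) ≤ Real.sqrt N)
    (hbound : ∀ k : ℕ, k ≤ N → |p.eval (k : ℝ)| ≤ 1) :
    ∀ x ∈ Set.Icc (0 : ℝ) (N : ℝ), |p.eval x| ≤ 4 :=
  bounded_on_integers_general N p hdeg hbound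
end

section
/- Let w be a positive integer and p a real polynomial such that |p(1/k)| ≤ 1 for all integers k ∈ {1, …, 2w}, p(1/w) ≤ 1/3, and p(1/(2w)) ≥ 2/3. Then deg(p) = Ω(w^{1/3}); precisely, there is a universal constant c > 0 such that deg(p) ≥ c · w^{1/3}. -/
/-!
Telescoping over `k ∈ [w, 2w)` gives a `k` with `p(1/(k+1)) - p(1/k) ≥ 1/(3w)`. Suppose
`w > 384 n³` with `n = deg p`. Interpolate `p` at the `n + 1` inverse integers `1/(k+1)` and
`1/⌊8n³/j²⌋` (`1 ≤ j ≤ n`). These cluster quadratically near `0`, like Chebyshev nodes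
near an endpoint, so the Lagrange basis polynomial of the `j`-th node is at most
`32n³/(j²w²)` at `1/k`. As `|p| ≤ 1` at all nodes,
`|p(1/k) - p(1/(k+1))| ≤ 2 ∑ⱼ 32n³/(j²w²) ≤ 128n³/w² < 1/(3w)`, a contradiction.
The heart of the estimate is the identity
`∏_{i ≠ j} i²/|i² - j²| = 2 (n!)² / ((n+j)! (n-j)!) ≤ 2 exp(-j²/2n)`, whose decay absorbs
the loss `exp(j²/4n)` caused by rounding the nodes to integers.
-/

open Finset Polynomial
open scoped Nat

theorem exists_mem_Ico_sub_div_le_succ_sub (f : ℕ → ℝ) (a : ℕ) {m : ℕ} (hm : 0 < m) :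
    ∃ k ∈ Ico a (a + m), (f (a + m) - f a) / m ≤ f (k + 1) - f k := by
  have htel : ∑ t ∈ range m, (f (a + t + 1) - f (a + t)) = f (a + m) - f a := by
    simpa [add_assoc] using sum_range_sub (fun t => f (a + t)) m
  obtain ⟨t, ht, hle⟩ := exists_le_of_sum_le (nonempty_range_iff.2 hm.ne')
    (f := fun _ => (f (a + m) - f a) / m) (g := fun t => f (a + t + 1) - f (a + t)) (by
      rw [sum_const, card_range, nsmul_eq_mul, htel]
      exact (mul_div_cancel₀ _ (Nat.cast_ne_zero.mpr hm.ne')).le)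
  exact ⟨a + t, by simp only [mem_Ico, mem_range] at ht ⊢; omega, hle⟩

namespace Lagrange

variable {ι : Type*} [DecidableEq ι]

theorem eval_basis {F : Type*} [Field F] (s : Finset ι) (v : ι → F) (i : ι) (y : F) :
    (Lagrange.basis s v i).eval y = ∏ j ∈ s.erase i, (y - v j) / (v i - v j) := by
  simp [Lagrange.basis, eval_prod, basisDivisor, div_eq_inv_mul]

theorem abs_eval_sub_eval_le_sum {s : Finset ι} {v : ι → ℝ} (hvs : Set.InjOn v s)
    {p : ℝ[X]} (hp : p.degree < #s) {M : ℝ} (hM : ∀ j ∈ s, |p.eval (v j)| ≤ M)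
    {i : ι} (hi : i ∈ s) (y : ℝ) :
    |p.eval y - p.eval (v i)| ≤ 2 * M * ∑ j ∈ s.erase i, |(Lagrange.basis s v j).eval y| := by
  have hsum : ∑ j ∈ s, (Lagrange.basis s v j).eval y = 1 := by
    simpa [eval_finsetSum] using congrArg (eval y) (sum_basis hvs ⟨i, hi⟩)
  have hp_eval : p.eval y = ∑ j ∈ s, p.eval (v j) * (Lagrange.basis s v j).eval y := by
    conv_lhs => rw [eq_interpolate hvs hp]
    simp [eval_finsetSum]
  have hrepr : p.eval y - p.eval (v i) =
      ∑ j ∈ s.erase i, (p.eval (v j) - p.eval (v i)) * (Lagrange.basis s v j).eval y := by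
    rw [sum_erase _ (by simp), hp_eval]
    simp only [sub_mul, sum_sub_distrib, ← mul_sum, hsum, mul_one]
  rw [hrepr, mul_sum]
  refine (abs_sum_le_sum_abs _ _).trans (sum_le_sum fun j hj => ?_)
  rw [abs_mul]
  gcongr
  calc |p.eval (v j) - p.eval (v i)| ≤ |p.eval (v j)| + |p.eval (v i)| := abs_sub _ _
    _ ≤ 2 * M := by linarith [hM j (mem_of_mem_erase hj), hM i hi]

end Lagrange

theorem abs_sub_inv_div_inv_sub_inv_le {a b y : ℝ} (ha : 0 < a) (hy : 0 < y)
    (hyb : y ≤ b⁻¹) : |(y - b⁻¹) / (a⁻¹ - b⁻¹)| ≤ a / |b - a| := by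
  have hb : 0 < b := inv_pos.mp (hy.trans_le hyb)
  have hyb' : |y - b⁻¹| ≤ b⁻¹ := by
    rw [abs_of_nonpos (by linarith)]
    linarith
  rw [inv_sub_inv ha.ne' hb.ne', abs_div, abs_div, abs_of_pos (mul_pos ha hb), div_div_eq_mul_div]
  calc |y - b⁻¹| * (a * b) / |b - a| ≤ b⁻¹ * (a * b) / |b - a| := by gcongr
    _ = a / |b - a| := by field_simp

theorem abs_sub_le_abs_natFloor_sub_add_one {a b : ℝ} (ha : 0 ≤ a) (hb : 0 ≤ b) :
    |b - a| ≤ |(⌊b⌋₊ : ℝ) - ⌊a⌋₊| + 1 := by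
  have : |(b - a) - ((⌊b⌋₊ : ℝ) - ⌊a⌋₊)| ≤ 1 := by
    rw [abs_le]
    constructor <;> linarith [Nat.floor_le ha, Nat.floor_le hb, Nat.lt_floor_add_one a,
      Nat.lt_floor_add_one b]
  linarith [abs_sub_abs_le_abs_sub (b - a) ((⌊b⌋₊ : ℝ) - ⌊a⌋₊)]

theorem natFloor_div_abs_sub_le {a b : ℝ} (ha : 0 ≤ a) (hb : 0 ≤ b) (hab : 2 ≤ |b - a|) :
    (⌊a⌋₊ : ℝ) / |(⌊b⌋₊ : ℝ) - ⌊a⌋₊| ≤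
      a / |b - a| * Real.exp (2 / |b - a|) := by
  set D := |b - a|
  have hgap : D - 1 ≤ |(⌊b⌋₊ : ℝ) - ⌊a⌋₊| := by
    linarith [abs_sub_le_abs_natFloor_sub_add_one ha hb]
  calc (⌊a⌋₊ : ℝ) / |(⌊b⌋₊ : ℝ) - ⌊a⌋₊| ≤ a / (D - 1) :=
        div_le_div₀ ha (Nat.floor_le ha) (by linarith) hgap
    _ = a / D * (1 / (D - 1) + 1) := by
        have : D - 1 ≠ 0 := by linarith
        field_simp
        ring
    _ ≤ a / D * Real.exp (2 / D) := by
        gcongr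
        refine (Real.add_one_le_exp _).trans (Real.exp_le_exp.mpr ?_)
        rw [div_le_div_iff₀ (by linarith) (by linarith)]
        linarith

theorem prod_Icc_div_add (n j : ℕ) :
    ∏ i ∈ Icc 1 n, ((i : ℝ) / (i + j)) = n ! * j ! / (n + j)! := by
  induction n with
  | zero => simp [Nat.factorial_ne_zero]
  | succ n ih =>
    rw [prod_Icc_succ_top (by omega), ih, show n + 1 + j = n + j + 1 by ring,
      Nat.factorial_succ, Nat.factorial_succ (n + j)]
    push_cast
    field_simp
    ring

theorem prod_Ico_sq_div_abs_sq_sub_sq {j : ℕ} (hj : 1 ≤ j) :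
    ∏ i ∈ Ico 1 j, ((i : ℝ) ^ 2 / |(i : ℝ) ^ 2 - j ^ 2|) =
      2 * (j ! : ℝ) ^ 2 / (2 * j)! := by
  have hreflect : ∏ i ∈ Ico 1 j, ((j : ℝ) - i) = ∏ i ∈ Ico 1 j, (i : ℝ) := by
    have h := prod_Ico_reflect (fun i : ℕ => (i : ℝ)) 1 (Nat.le_succ j)
    rw [Nat.add_sub_cancel_left, Nat.add_sub_cancel] at h
    rw [← h]
    exact prod_congr rfl fun i hi => by rw [Nat.cast_sub (mem_Ico.mp hi).2.le]
  have hhalf : ∏ i ∈ Ico 1 j, ((i : ℝ) / (i + j)) = 2 * (j ! : ℝ) ^ 2 / (2 * j)! := by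
    have h := prod_erase_mul (Icc 1 j) (fun i : ℕ => (i : ℝ) / (i + j))
      (mem_Icc.mpr ⟨hj, le_rfl⟩)
    rw [Icc_erase_right, prod_Icc_div_add] at h
    rw [two_mul j, sq, mul_div_assoc, ← h]
    field_simp
    ring
  -- `i² / (j² - i²) = i / (j - i) · i / (i + j)`; the first factors cancel by `i ↦ j - i`.
  calc ∏ i ∈ Ico 1 j, ((i : ℝ) ^ 2 / |(i : ℝ) ^ 2 - j ^ 2|)
      = (∏ i ∈ Ico 1 j, (i : ℝ)) / (∏ i ∈ Ico 1 j, ((j : ℝ) - i)) *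
          ∏ i ∈ Ico 1 j, ((i : ℝ) / (i + j)) := by
        rw [← prod_div_distrib, ← prod_mul_distrib]
        refine prod_congr rfl fun i hi => ?_
        have hij : (i : ℝ) < j := by exact_mod_cast (mem_Ico.mp hi).2
        have : (0 : ℝ) < i := by exact_mod_cast (mem_Ico.mp hi).1
        rw [abs_of_neg (by nlinarith), neg_sub,
          show (j : ℝ) ^ 2 - i ^ 2 = (j - i) * (i + j) by ring, sq, _root_.div_mul_div_comm]
    _ = 2 * (j ! : ℝ) ^ 2 / (2 * j)! := by
        rw [hreflect, div_self (prod_ne_zero_iff.mpr fun i hi => by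
          have : 0 < i := (mem_Ico.mp hi).1
          positivity), one_mul, hhalf]

theorem prod_Icc_erase_sq_div_abs_sq_sub_sq {j n : ℕ} (hj : 1 ≤ j) (hjn : j ≤ n) :
    ∏ i ∈ (Icc 1 n).erase j, ((i : ℝ) ^ 2 / |(i : ℝ) ^ 2 - j ^ 2|) =
      2 * (n ! : ℝ) ^ 2 / ((n + j)! * (n - j)!) := by
  induction n, hjn using Nat.le_induction with
  | base =>
    rw [Icc_erase_right, prod_Ico_sq_div_abs_sq_sub_sq hj, ← two_mul, Nat.sub_self,
      Nat.factorial_zero, Nat.cast_one, mul_one]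
  | succ n hjn ih =>
    have hset : (Icc 1 (n + 1)).erase j = insert (n + 1) ((Icc 1 n).erase j) := by
      ext i
      simp only [mem_erase, mem_Icc, mem_insert]
      omega
    have hjn' : (j : ℝ) ≤ n := by exact_mod_cast hjn
    have hfac : ((n + 1 : ℕ) : ℝ) ^ 2 - j ^ 2 = (n - j + 1) * (n + j + 1) := by push_cast; ring
    have h1 : (n : ℝ) - j + 1 ≠ 0 := by linarith
    rw [hset, prod_insert (by simp), ih, hfac, abs_of_pos (by positivity),
      show n + 1 + j = n + j + 1 by ring, show n + 1 - j = n - j + 1 by omega,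
      Nat.factorial_succ, Nat.factorial_succ (n + j), Nat.factorial_succ (n - j)]
    push_cast [Nat.cast_sub hjn]
    field_simp

theorem factorial_sq_div_le_exp {n j : ℕ} (hjn : j ≤ n) :
    (n ! : ℝ) ^ 2 / ((n + j)! * (n - j)!) ≤ Real.exp (-(j : ℝ) ^ 2 / (2 * n)) := by
  induction j with
  | zero => simp [sq, Nat.factorial_ne_zero]
  | succ j ih =>
    have hn : (j : ℝ) + 1 ≤ n := by exact_mod_cast hjn
    have hrec : (n ! : ℝ) ^ 2 / ((n + (j + 1))! * (n - (j + 1))!) =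
        (n ! : ℝ) ^ 2 / ((n + j)! * (n - j)!) * (1 - (2 * j + 1) / (n + j + 1)) := by
      rw [show n + (j + 1) = n + j + 1 by ring, show n - j = n - (j + 1) + 1 by omega,
        Nat.factorial_succ (n + j), Nat.factorial_succ (n - (j + 1))]
      push_cast [Nat.cast_sub hjn]
      have : (n : ℝ) - (j + 1) + 1 ≠ 0 := by linarith
      field_simp
      ring
    have hstep : 1 - (2 * (j : ℝ) + 1) / (n + j + 1) ≤ Real.exp (-(2 * j + 1) / (2 * n)) := by
      calc 1 - (2 * (j : ℝ) + 1) / (n + j + 1) ≤ Real.exp (-((2 * j + 1) / (n + j + 1))) := by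
            linarith [Real.add_one_le_exp (-((2 * (j : ℝ) + 1) / (n + j + 1)))]
        _ ≤ Real.exp (-(2 * j + 1) / (2 * n)) := by
            rw [Real.exp_le_exp, neg_div, neg_le_neg_iff]
            gcongr
            linarith
    rw [hrec]
    calc _ ≤ Real.exp (-(j : ℝ) ^ 2 / (2 * n)) * Real.exp (-(2 * j + 1) / (2 * n)) := by
          gcongr
          · rw [sub_nonneg, div_le_one (by positivity)]
            linarith
          · exact ih (by omega)
      _ = Real.exp (-((j + 1 : ℕ) : ℝ) ^ 2 / (2 * n)) := by
          rw [← Real.exp_add]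
          push_cast
          ring_nf

/-- The constant `8` keeps the values `8n³/j²` at least `8n²/j² ≥ 8` apart, so that rounding
them costs at most a factor `exp (j² / 4n²)` per node. -/
noncomputable def node (n j : ℕ) : ℕ := ⌊8 * (n : ℝ) ^ 3 / (j : ℝ) ^ 2⌋₊

section node

variable {n i j : ℕ}

theorem node_le (hj : 1 ≤ j) : node n j ≤ 8 * n ^ 3 := by
  refine Nat.floor_le_of_le ?_
  push_cast
  exact div_le_self (by positivity) (one_le_pow₀ (by exact_mod_cast hj))

theorem one_le_node (hj : 1 ≤ j) (hjn : j ≤ n) : 1 ≤ node n j := by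
  refine Nat.le_floor ?_
  have hj' : (1 : ℝ) ≤ j := by exact_mod_cast hj
  have hjn' : (j : ℝ) ≤ n := by exact_mod_cast hjn
  rw [Nat.cast_one, le_div_iff₀ (by positivity)]
  nlinarith [pow_le_pow_left₀ (by positivity) hjn' 2]

theorem eight_le_eight_mul_sq_div (hj : 1 ≤ j) (hjn : j ≤ n) :
    8 ≤ 8 * (n : ℝ) ^ 2 / j ^ 2 := by
  have hjn' : (j : ℝ) ≤ n := by exact_mod_cast hjn
  rw [le_div_iff₀ (by positivity)]
  nlinarith

theorem abs_eight_mul_cube_div_sub (hi : 1 ≤ i) (hj : 1 ≤ j) :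
    |8 * (n : ℝ) ^ 3 / i ^ 2 - 8 * n ^ 3 / j ^ 2| =
      8 * n ^ 3 * |(j : ℝ) ^ 2 - i ^ 2| / (i ^ 2 * j ^ 2) := by
  rw [div_sub_div _ _ (by positivity) (by positivity), abs_div,
    abs_of_pos (by positivity : (0 : ℝ) < i ^ 2 * j ^ 2),
    show 8 * (n : ℝ) ^ 3 * j ^ 2 - i ^ 2 * (8 * n ^ 3) = 8 * n ^ 3 * (j ^ 2 - i ^ 2) by ring,
    abs_mul, abs_of_nonneg (by positivity : (0 : ℝ) ≤ 8 * n ^ 3)]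

theorem eight_mul_sq_div_le_abs_sub (hi : 1 ≤ i) (hin : i ≤ n) (hj : 1 ≤ j) (hij : i ≠ j) :
    8 * (n : ℝ) ^ 2 / j ^ 2 ≤ |8 * (n : ℝ) ^ 3 / i ^ 2 - 8 * n ^ 3 / j ^ 2| := by
  have hin' : (i : ℝ) ≤ n := by exact_mod_cast hin
  have hn : 0 < n := by omega
  have hsep : (i : ℝ) ≤ |(j : ℝ) ^ 2 - i ^ 2| := by
    rcases lt_or_gt_of_ne hij with h | h
    · have : (i : ℝ) + 1 ≤ j := by exact_mod_cast h
      rw [abs_of_pos (by nlinarith)]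
      nlinarith
    · have : (j : ℝ) + 1 ≤ i := by exact_mod_cast h
      rw [abs_of_neg (by nlinarith)]
      nlinarith
  rw [abs_eight_mul_cube_div_sub hi hj, div_le_div_iff₀ (by positivity) (by positivity)]
  have : (i : ℝ) ^ 2 ≤ n * |(j : ℝ) ^ 2 - i ^ 2| := by nlinarith
  have := mul_le_mul_of_nonneg_left this (by positivity : (0 : ℝ) ≤ 8 * n ^ 2 * j ^ 2)
  nlinarith

theorem div_abs_sub_eq_sq_div_abs_sq_sub (hn : 1 ≤ n) (hi : 1 ≤ i) (hj : 1 ≤ j) :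
    8 * (n : ℝ) ^ 3 / j ^ 2 / |8 * (n : ℝ) ^ 3 / i ^ 2 - 8 * n ^ 3 / j ^ 2| =
      (i : ℝ) ^ 2 / |(i : ℝ) ^ 2 - j ^ 2| := by
  rw [abs_eight_mul_cube_div_sub hi hj, abs_sub_comm]
  field_simp

theorem node_injOn : Set.InjOn (node n) (Icc 1 n) := by
  intro i hi j hj hij
  by_contra hne
  obtain ⟨hi1, hin⟩ := mem_Icc.mp hi
  obtain ⟨hj1, hjn⟩ := mem_Icc.mp hj
  have hgap := eight_mul_sq_div_le_abs_sub hi1 hin hj1 hne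
  have hfloor := abs_sub_le_abs_natFloor_sub_add_one (a := 8 * (n : ℝ) ^ 3 / j ^ 2)
    (b := 8 * (n : ℝ) ^ 3 / i ^ 2) (by positivity) (by positivity)
  have h8 := eight_le_eight_mul_sq_div hj1 hjn
  simp only [node] at hij
  rw [hij, sub_self, abs_zero] at hfloor
  linarith

theorem prod_node_div_abs_sub_le_two (hj : 1 ≤ j) (hjn : j ≤ n) :
    ∏ i ∈ (Icc 1 n).erase j, ((node n j : ℝ) / |(node n i : ℝ) - node n j|) ≤ 2 := by
  have hn : (0 : ℝ) < n := by exact_mod_cast (hj.trans hjn)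
  set δ := (j : ℝ) ^ 2 / (4 * n ^ 2) with hδ
  have hfactor : ∀ i ∈ (Icc 1 n).erase j, (node n j : ℝ) / |(node n i : ℝ) - node n j| ≤
      (i : ℝ) ^ 2 / |(i : ℝ) ^ 2 - j ^ 2| * Real.exp δ := by
    intro i hi
    obtain ⟨hij, hi1, hin⟩ : i ≠ j ∧ 1 ≤ i ∧ i ≤ n := by simpa using hi
    have hgap := eight_mul_sq_div_le_abs_sub hi1 hin hj hij
    have h8 := eight_le_eight_mul_sq_div hj hjn
    calc _ ≤ 8 * (n : ℝ) ^ 3 / j ^ 2 / |8 * (n : ℝ) ^ 3 / i ^ 2 - 8 * n ^ 3 / j ^ 2| *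
          Real.exp (2 / |8 * (n : ℝ) ^ 3 / i ^ 2 - 8 * n ^ 3 / j ^ 2|) :=
          natFloor_div_abs_sub_le (by positivity) (by positivity) (by linarith)
      _ ≤ _ := by
          rw [div_abs_sub_eq_sq_div_abs_sq_sub (hj.trans hjn) hi1 hj]
          gcongr
          calc _ ≤ 2 / (8 * (n : ℝ) ^ 2 / j ^ 2) := by gcongr
            _ = δ := by rw [hδ]; field_simp; ring
  have hcard : #((Icc 1 n).erase j) ≤ n := by
    rw [card_erase_of_mem (by simp [hj, hjn]), Nat.card_Icc]
    omega
  calc _ ≤ ∏ i ∈ (Icc 1 n).erase j, ((i : ℝ) ^ 2 / |(i : ℝ) ^ 2 - j ^ 2| * Real.exp δ) :=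
        prod_le_prod (fun _ _ => by positivity) hfactor
    _ = 2 * ((n ! : ℝ) ^ 2 / ((n + j)! * (n - j)!)) * Real.exp δ ^ #((Icc 1 n).erase j) := by
        rw [prod_mul_distrib, prod_const, prod_Icc_erase_sq_div_abs_sq_sub_sq hj hjn,
          mul_div_assoc]
    _ ≤ 2 * Real.exp (-(j : ℝ) ^ 2 / (2 * n)) * Real.exp δ ^ n := by
        gcongr
        · exact factorial_sq_div_le_exp hjn
        · exact Real.one_le_exp (by positivity)
    _ = 2 * Real.exp (-((j : ℝ) ^ 2 / (4 * n))) := by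
        rw [← Real.exp_nat_mul, mul_assoc, ← Real.exp_add]
        congr 2
        rw [hδ]
        field_simp
        ring
    _ ≤ 2 := by
        have : (0 : ℝ) ≤ j ^ 2 / (4 * n) := by positivity
        linarith [Real.exp_le_one_iff.mpr (neg_nonpos.mpr this)]

theorem abs_inv_sub_inv_succ_div_le {w k : ℕ} (hw : 16 * (n : ℝ) ^ 3 ≤ w)
    (hwk : w ≤ k) (hj1 : 1 ≤ j) (hjn : j ≤ n) :
    |((k : ℝ)⁻¹ - ((k + 1 : ℕ) : ℝ)⁻¹) / ((node n j : ℝ)⁻¹ - ((k + 1 : ℕ) : ℝ)⁻¹)| ≤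
      16 * n ^ 3 / (j ^ 2 * w ^ 2) := by
  have hn : (1 : ℝ) ≤ n := by exact_mod_cast hj1.trans hjn
  have hj' : (1 : ℝ) ≤ j := by exact_mod_cast hj1
  have hw0 : (0 : ℝ) < w := by linarith [one_le_pow₀ (n := 3) hn]
  have hk : (w : ℝ) ≤ k := by exact_mod_cast hwk
  have hk0 : (0 : ℝ) < k := hw0.trans_le hk
  have hnum : (k : ℝ)⁻¹ - ((k + 1 : ℕ) : ℝ)⁻¹ = ((k : ℝ) * (k + 1))⁻¹ := by
    push_cast
    field_simp
    ring
  have hnode : (node n j : ℝ) ≤ 8 * n ^ 3 / j ^ 2 := Nat.floor_le (by positivity)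
  have hnode_pos : (0 : ℝ) < node n j := by exact_mod_cast one_le_node hj1 hjn
  have hden : (j : ℝ) ^ 2 / (16 * n ^ 3) ≤
      (node n j : ℝ)⁻¹ - ((k + 1 : ℕ) : ℝ)⁻¹ := by
    have h1 : (j : ℝ) ^ 2 / (8 * n ^ 3) ≤ (node n j : ℝ)⁻¹ := by
      rw [← inv_div]
      exact inv_anti₀ hnode_pos hnode
    have h2 : ((k + 1 : ℕ) : ℝ)⁻¹ ≤ (j : ℝ) ^ 2 / (16 * n ^ 3) := by
      rw [← inv_div]
      refine inv_anti₀ (by positivity) ?_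
      push_cast
      rw [div_le_iff₀ (by positivity)]
      nlinarith [one_le_pow₀ (n := 2) hj']
    have : (j : ℝ) ^ 2 / (8 * n ^ 3) = 2 * ((j : ℝ) ^ 2 / (16 * n ^ 3)) := by
      field_simp
      ring
    linarith
  have hden_pos : (0 : ℝ) < (j : ℝ) ^ 2 / (16 * n ^ 3) := by positivity
  rw [hnum, abs_div, abs_of_pos (by positivity), abs_of_pos (hden_pos.trans_le hden)]
  calc ((k : ℝ) * (k + 1))⁻¹ / ((node n j : ℝ)⁻¹ - ((k + 1 : ℕ) : ℝ)⁻¹) ≤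
      (w ^ 2 : ℝ)⁻¹ / ((j : ℝ) ^ 2 / (16 * n ^ 3)) := by
        gcongr
        nlinarith
    _ = 16 * n ^ 3 / (j ^ 2 * w ^ 2) := by
        field_simp

end node

noncomputable def nodes (n m : ℕ) : ℕ → ℕ := Function.update (node n) 0 m

section nodes

variable {n m : ℕ}

theorem nodes_zero : nodes n m 0 = m := Function.update_self _ _ _

theorem nodes_of_ne_zero {j : ℕ} (hj : j ≠ 0) : nodes n m j = node n j :=
  Function.update_of_ne hj _ _

theorem nodes_injOn (hm : 8 * n ^ 3 < m) :
    Set.InjOn (nodes n m) (insert 0 (Icc 1 n) : Finset ℕ) := by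
  have heq : Set.EqOn (node n) (nodes n m) (Icc 1 n : Finset ℕ) := fun j hj =>
    (nodes_of_ne_zero (by simp only [coe_Icc, Set.mem_Icc] at hj; omega)).symm
  rw [coe_insert, Set.injOn_insert (by simp)]
  refine ⟨node_injOn.congr heq, ?_⟩
  rintro ⟨j, hj, hjm⟩
  rw [← heq hj, nodes_zero] at hjm
  simp only [coe_Icc, Set.mem_Icc] at hj
  have := node_le (n := n) hj.1
  omega

theorem abs_eval_basis_nodes_le {w k j : ℕ} (hw : 16 * (n : ℝ) ^ 3 ≤ w) (hwk : w ≤ k)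
    (hj : j ∈ Icc 1 n) :
    |(Lagrange.basis (insert 0 (Icc 1 n)) (fun i => (nodes n (k + 1) i : ℝ)⁻¹) j).eval
      (k : ℝ)⁻¹| ≤ 32 * n ^ 3 / (j ^ 2 * w ^ 2) := by
  obtain ⟨hj1, hjn⟩ := mem_Icc.mp hj
  have hn : (1 : ℝ) ≤ n := by exact_mod_cast hj1.trans hjn
  have hw0 : (0 : ℝ) < w := by linarith [one_le_pow₀ (n := 3) hn]
  have hk : (w : ℝ) ≤ k := by exact_mod_cast hwk
  have hk0 : (0 : ℝ) < k := hw0.trans_le hk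
  have hset : (insert 0 (Icc 1 n)).erase j = insert 0 ((Icc 1 n).erase j) := by
    ext i
    simp only [mem_erase, mem_insert, mem_Icc]
    omega
  rw [Lagrange.eval_basis, hset, prod_insert (by simp), abs_mul, abs_prod,
    nodes_zero, nodes_of_ne_zero (j := j) (by omega)]
  have hfirst := abs_inv_sub_inv_succ_div_le hw hwk hj1 hjn
  have hrest : ∏ i ∈ (Icc 1 n).erase j,
      |((k : ℝ)⁻¹ - (nodes n (k + 1) i : ℝ)⁻¹) /
        ((node n j : ℝ)⁻¹ - (nodes n (k + 1) i : ℝ)⁻¹)| ≤ 2 := by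
    refine (prod_le_prod (fun _ _ => abs_nonneg _) fun i hi => ?_).trans
      (prod_node_div_abs_sub_le_two hj1 hjn)
    obtain ⟨-, hi1, hin⟩ : i ≠ j ∧ 1 ≤ i ∧ i ≤ n := by simpa using hi
    rw [nodes_of_ne_zero (by omega)]
    refine abs_sub_inv_div_inv_sub_inv_le (by exact_mod_cast one_le_node hj1 hjn)
      (inv_pos.mpr hk0) (inv_anti₀ (by exact_mod_cast one_le_node hi1 hin) ?_)
    have := node_le (n := n) hi1
    calc (node n i : ℝ) ≤ 8 * n ^ 3 := by exact_mod_cast this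
      _ ≤ k := by nlinarith
  calc _ ≤ 16 * (n : ℝ) ^ 3 / (j ^ 2 * w ^ 2) * 2 :=
        mul_le_mul hfirst hrest (by positivity) (by positivity)
    _ = _ := by ring

theorem sum_abs_eval_basis_nodes_le {w k : ℕ} (hw : 16 * (n : ℝ) ^ 3 ≤ w) (hwk : w ≤ k) :
    ∑ j ∈ Icc 1 n, |(Lagrange.basis (insert 0 (Icc 1 n))
      (fun i => (nodes n (k + 1) i : ℝ)⁻¹) j).eval (k : ℝ)⁻¹| ≤ 64 * n ^ 3 / w ^ 2 := by
  have hsum_sq : ∑ j ∈ Icc 1 n, ((j : ℝ) ^ 2)⁻¹ ≤ 2 := by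
    have h := sum_Ioo_inv_sq_le (α := ℝ) 0 (n + 1)
    rw [show Ioo 0 (n + 1) = Icc 1 n by ext; simp only [mem_Ioo, mem_Icc]; omega] at h
    simpa using h
  calc _ ≤ ∑ j ∈ Icc 1 n, 32 * (n : ℝ) ^ 3 / w ^ 2 * ((j : ℝ) ^ 2)⁻¹ :=
        sum_le_sum fun j hj => (abs_eval_basis_nodes_le hw hwk hj).trans (le_of_eq (by ring))
    _ ≤ 32 * (n : ℝ) ^ 3 / w ^ 2 * 2 := by
        rw [← mul_sum]
        gcongr
    _ = _ := by ring

end nodes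

theorem le_mul_cube_of_jump {p : ℝ[X]} {n w k : ℕ} (hp : p.natDegree ≤ n) (hwk : w ≤ k)
    (hk : k < 2 * w) (hbound : ∀ i, 1 ≤ i → i ≤ 2 * w → |p.eval (i : ℝ)⁻¹| ≤ 1)
    (hjump : 1 / (3 * w) ≤ |p.eval (k : ℝ)⁻¹ - p.eval ((k + 1 : ℕ) : ℝ)⁻¹|) :
    (w : ℝ) ≤ 384 * n ^ 3 := by
  by_contra! hw
  have hw0 : (0 : ℝ) < w := lt_of_le_of_lt (by positivity) hw
  have hm : 8 * n ^ 3 < k + 1 := by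
    have : (8 * n ^ 3 : ℝ) < k + 1 := by
      have : (w : ℝ) ≤ k := by exact_mod_cast hwk
      nlinarith
    exact_mod_cast this
  set s := insert 0 (Icc 1 n)
  have hinj : Set.InjOn (fun i => (nodes n (k + 1) i : ℝ)⁻¹) s :=
    (inv_injective.comp Nat.cast_injective).comp_injOn (nodes_injOn hm)
  have hdeg : p.degree < #s := by
    rw [card_insert_of_notMem (by simp), Nat.card_Icc, Nat.add_sub_cancel]
    exact degree_le_natDegree.trans_lt (by exact_mod_cast Nat.lt_succ_of_le hp)
  have hvalues : ∀ i ∈ s, |p.eval (nodes n (k + 1) i : ℝ)⁻¹| ≤ 1 := by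
    intro i hi
    rcases mem_insert.mp hi with rfl | hi
    · rw [nodes_zero]
      exact hbound _ (by omega) (by omega)
    · obtain ⟨hi1, hin⟩ := mem_Icc.mp hi
      rw [nodes_of_ne_zero (by omega)]
      have := node_le (n := n) hi1
      exact hbound _ (one_le_node hi1 hin) (by omega)
  have hinterp := Lagrange.abs_eval_sub_eval_le_sum hinj hdeg hvalues (mem_insert_self 0 _)
    (k : ℝ)⁻¹
  rw [erase_insert (by simp), nodes_zero] at hinterp
  have hbasis := sum_abs_eval_basis_nodes_le (n := n) (by linarith) hwk
  have hlarge : 1 / (3 * (w : ℝ)) ≤ 128 * n ^ 3 / w ^ 2 :=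
    calc 1 / (3 * (w : ℝ)) ≤ _ := hjump
      _ ≤ _ := hinterp
      _ ≤ 2 * 1 * (64 * n ^ 3 / w ^ 2) := by gcongr
      _ = 128 * n ^ 3 / w ^ 2 := by ring
  have hsmall : 128 * (n : ℝ) ^ 3 / w ^ 2 < 1 / (3 * w) := by
    rw [div_lt_div_iff₀ (by positivity) (by positivity)]
    nlinarith
  exact hsmall.not_ge hlarge

/-- fedja's lemma: a polynomial bounded at inverse-integer points with a jump
between 1/(2w) and 1/w has degree Ω(w^{1/3}). -/
theorem fedja_lower_bound : ∃ c : ℝ, 0 < c ∧ ∀ (w : ℕ), 0 < w → ∀ p : Polynomial ℝ,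
    (∀ k : ℕ, 1 ≤ k → k ≤ 2 * w → |p.eval (1 / (k : ℝ))| ≤ 1) →
    p.eval (1 / (w : ℝ)) ≤ 1 / 3 →
    2 / 3 ≤ p.eval (1 / (2 * w : ℝ)) →
    c * (w : ℝ) ^ ((1 : ℝ) / 3) ≤ (p.natDegree : ℝ) := by
  refine ⟨1 / 8, by norm_num, fun w hw p hbound hlow hhigh => ?_⟩
  obtain ⟨k, hk, hstep⟩ :=
    exists_mem_Ico_sub_div_le_succ_sub (fun i => p.eval (i : ℝ)⁻¹) w hw
  obtain ⟨hwk, hk2⟩ := mem_Ico.mp hk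
  have hgain : 1 / 3 ≤ p.eval ((w + w : ℕ) : ℝ)⁻¹ - p.eval (w : ℝ)⁻¹ := by
    push_cast
    rw [← two_mul, ← one_div, ← one_div]
    linarith
  have hjump : 1 / (3 * w) ≤ |p.eval (k : ℝ)⁻¹ - p.eval ((k + 1 : ℕ) : ℝ)⁻¹| := by
    rw [abs_sub_comm, ← div_div]
    refine le_trans ?_ (hstep.trans (le_abs_self _))
    gcongr
  have hcube := le_mul_cube_of_jump le_rfl hwk (by omega)
    (by simpa only [one_div] using hbound) hjump
  have hroot : (w : ℝ) ^ ((1 : ℝ) / 3) ≤ 8 * p.natDegree := by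
    rw [one_div, Real.rpow_inv_le_iff_of_pos (by positivity) (by positivity) (by norm_num),
      Real.rpow_ofNat]
    nlinarith [pow_nonneg (Nat.cast_nonneg (α := ℝ) p.natDegree) 3]
  linarith
end
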